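/- arXiv:0801.2650 — 7 statements merged into one kernel-verified Lean document; each statement's English description precedes it below -/
import Mathlib

section
/- Let n ≥ 1 and let f, g : ℝⁿ → ℝ be real analytic on a neighbourhood of the origin with f(0) = g(0) = 0, neither vanishing identically on any neighbourhood of the origin. Let m (resp. k) be the order of f (resp. g) at 0, i.e. the least degree of a nonvanishing homogeneous term in the Taylor expansion at 0, and let f_m (resp. g_k) denote this initial homogeneous form, f_m(x) = (1/m!)·Dᵐf(0)(x,…,x). If there exists a C¹ diffeomorphism germ σ : (ℝⁿ,0) → (ℝⁿ,0) with f = g ∘ σ on a neighbourhood of the origin, then k = m and f_m(x) = g_m(A·x) for every x ∈ ℝⁿ, where A = Dσ(0) is the (invertible) derivative of σ at 0; in particular the initial homogeneous forms of f and g are linearly equivalent. -/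
/-!
Along a ray `t ↦ t • x`, Taylor's formula gives `f (t • x) / t ^ m → f_m x`, and since
`σ (t • x) / t → A x`, also `g (σ (t • x)) / t ^ k → g_k (A x)`. The two quotients differ by the
factor `t ^ (m - k)`, so if `k < m` then `g_k ∘ A` vanishes, and if `m < k` then `f_m` does. By
polarization a homogeneous form vanishes only when the (symmetric) iterated derivative does, and
`A` is invertible, which rules out both cases; for `k = m` the two limits coincide.
-/

open Filter Topology

noncomputable section

/-- A C¹ diffeomorphism germ at the origin: a continuously differentiable map defined on an
open neighbourhood of the origin, fixing the origin, which is a homeomorphism onto an open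
neighbourhood of the origin with continuously differentiable inverse. -/
def IsC1DiffeoGerm {E : Type*} [NormedAddCommGroup E] [NormedSpace ℝ E] (σ : E → E) : Prop :=
  σ 0 = 0 ∧ ∃ (U V : Set E) (τ : E → E), IsOpen U ∧ IsOpen V ∧ (0 : E) ∈ U ∧ (0 : E) ∈ V ∧
    Set.MapsTo σ U V ∧ Set.MapsTo τ V U ∧ (∀ x ∈ U, τ (σ x) = x) ∧ (∀ y ∈ V, σ (τ y) = y) ∧
    ContDiffOn ℝ 1 σ U ∧ ContDiffOn ℝ 1 τ V

open Asymptotics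
open scoped Nat

section Polarization

variable {𝕜 E F : Type*} [NontriviallyNormedField 𝕜] [CharZero 𝕜]
  [NormedAddCommGroup E] [NormedSpace 𝕜 E] [NormedAddCommGroup F] [NormedSpace 𝕜 F]

theorem ContinuousMultilinearMap.eq_zero_of_comp_perm_of_diagonal {n : ℕ}
    (M : E [×n]→L[𝕜] F) (hsymm : ∀ (v : Fin n → E) (π : Equiv.Perm (Fin n)), M (v ∘ π) = M v)
    (hdiag : ∀ y, M (fun _ => y) = 0) : M = 0 := by
  ext v
  -- the `n`-th derivative of the zero map `y ↦ M (fun _ => y)` is `v ↦ ∑ π, M (v ∘ π)`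
  have hsum : ∑ π : Equiv.Perm (Fin n), M (v ∘ π) = 0 := by
    simpa [hdiag, Function.comp_def] using (M.iteratedFDeriv_comp_diagonal 0 v).symm
  rw [Finset.sum_congr rfl fun π _ => hsymm v π, Finset.sum_const, Finset.card_univ,
    Fintype.card_perm, Fintype.card_fin, ← Nat.cast_smul_eq_nsmul 𝕜] at hsum
  exact (smul_eq_zero.mp hsum).resolve_left (Nat.cast_ne_zero.mpr n.factorial_ne_zero)

theorem AnalyticAt.exists_inv_factorial_smul_iteratedFDeriv_ne_zero [CompleteSpace F]
    {f : E → F} {x : E} (hf : AnalyticAt 𝕜 f x) {n : ℕ} (h : iteratedFDeriv 𝕜 n f x ≠ 0) :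
    ∃ y, (n ! : 𝕜)⁻¹ • iteratedFDeriv 𝕜 n f x (fun _ => y) ≠ 0 := by
  by_contra! hdiag
  refine h ((iteratedFDeriv 𝕜 n f x).eq_zero_of_comp_perm_of_diagonal
    hf.contDiffAt.iteratedFDeriv_comp_perm fun y => ?_)
  simpa [Nat.factorial_ne_zero] using hdiag y

end Polarization

theorem ContinuousMultilinearMap.map_smul_diagonal {𝕜 E F : Type*} [NontriviallyNormedField 𝕜]
    [NormedAddCommGroup E] [NormedSpace 𝕜 E] [NormedAddCommGroup F] [NormedSpace 𝕜 F] {n : ℕ}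
    (M : E [×n]→L[𝕜] F) (t : 𝕜) (y : E) :
    M (fun _ => t • y) = t ^ n • M (fun _ => y) := by
  simpa using M.map_smul_univ (fun _ => t) (fun _ => y)

section Taylor

variable {E F : Type*} [NormedAddCommGroup E] [NormedSpace ℝ E]
  [NormedAddCommGroup F] [NormedSpace ℝ F]

theorem AnalyticAt.isBigO_sub_inv_factorial_smul_iteratedFDeriv [CompleteSpace F] {f : E → F}
    (hf : AnalyticAt ℝ f 0) {m : ℕ} (hm : ∀ j < m, iteratedFDeriv ℝ j f 0 = 0) :
    (fun y => f y - (m ! : ℝ)⁻¹ • iteratedFDeriv ℝ m f 0 (fun _ => y)) =O[𝓝 0]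
      fun y => ‖y‖ ^ (m + 1) := by
  obtain ⟨p, r, hp⟩ := hf
  have hcoeff (j : ℕ) (y : E) :
      p j (fun _ => y) = (j ! : ℝ)⁻¹ • iteratedFDeriv ℝ j f 0 (fun _ => y) := by
    rw [← hp.factorial_smul y j, ← Nat.cast_smul_eq_nsmul ℝ, inv_smul_smul₀ (by positivity)]
  have hpartial (y : E) :
      p.partialSum (m + 1) y = (m ! : ℝ)⁻¹ • iteratedFDeriv ℝ m f 0 (fun _ => y) := by
    rw [FormalMultilinearSeries.partialSum, Finset.sum_range_succ, Finset.sum_eq_zero, zero_add,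
      hcoeff]
    intro j hj
    rw [hcoeff, hm j (Finset.mem_range.mp hj), zero_apply, smul_zero]
  simpa [hpartial] using hp.hasFPowerSeriesAt.isBigO_sub_partialSum_pow (m + 1)

theorem tendsto_inv_pow_smul_comp_of_isBigO {R : E → F} {m : ℕ}
    (hR : R =O[𝓝 0] fun y => ‖y‖ ^ (m + 1)) {c : ℝ → E} {L : E}
    (hc : Tendsto (fun t => t⁻¹ • c t) (𝓝[≠] 0) (𝓝 L)) :
    Tendsto (fun t => (t ^ m)⁻¹ • R (c t)) (𝓝[≠] 0) (𝓝 0) := by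
  have hc_bigO : c =O[𝓝[≠] 0] fun t => t := by
    have := (isBigO_refl (fun t : ℝ => t) (𝓝[≠] 0)).smul (hc.isBigO_one ℝ)
    refine this.congr' ?_ (.of_forall fun t => by simp)
    filter_upwards [self_mem_nhdsWithin] with t ht
    exact smul_inv_smul₀ ht (c t)
  have hc0 : Tendsto c (𝓝[≠] 0) (𝓝 0) :=
    hc_bigO.trans_tendsto (tendsto_id.mono_left nhdsWithin_le_nhds)
  have hRc : (fun t => R (c t)) =o[𝓝[≠] 0] fun t => t ^ m :=
    ((hR.comp_tendsto hc0).trans (hc_bigO.norm_left.pow (m + 1))).trans_isLittleO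
      ((isLittleO_pow_pow (Nat.lt_succ_self m)).mono nhdsWithin_le_nhds)
  exact hRc.tendsto_inv_smul_nhds_zero

theorem AnalyticAt.tendsto_inv_pow_smul_comp [CompleteSpace F] {f : E → F}
    (hf : AnalyticAt ℝ f 0) {m : ℕ} (hm : ∀ j < m, iteratedFDeriv ℝ j f 0 = 0) {c : ℝ → E}
    {L : E} (hc : Tendsto (fun t => t⁻¹ • c t) (𝓝[≠] 0) (𝓝 L)) :
    Tendsto (fun t => (t ^ m)⁻¹ • f (c t)) (𝓝[≠] 0)
      (𝓝 ((m ! : ℝ)⁻¹ • iteratedFDeriv ℝ m f 0 (fun _ => L))) := by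
  set P : E → F := fun y => (m ! : ℝ)⁻¹ • iteratedFDeriv ℝ m f 0 (fun _ => y)
  have hP : Continuous P := by fun_prop
  have hsplit : ∀ᶠ t in 𝓝[≠] (0 : ℝ),
      (t ^ m)⁻¹ • (f (c t) - P (c t)) + P (t⁻¹ • c t) = (t ^ m)⁻¹ • f (c t) := by
    filter_upwards [self_mem_nhdsWithin] with t ht
    have : P (c t) = t ^ m • P (t⁻¹ • c t) := by
      rw [smul_comm, ← ContinuousMultilinearMap.map_smul_diagonal, smul_inv_smul₀ ht]
    rw [this, smul_sub, inv_smul_smul₀ (pow_ne_zero m ht), sub_add_cancel]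
  simpa using ((tendsto_inv_pow_smul_comp_of_isBigO
    (hf.isBigO_sub_inv_factorial_smul_iteratedFDeriv hm) hc).add
    ((hP.tendsto L).comp hc)).congr' hsplit

end Taylor

theorem fderiv_comp_fderiv_eq_id_of_leftInverse {𝕜 E F : Type*} [NontriviallyNormedField 𝕜]
    [NormedAddCommGroup E] [NormedSpace 𝕜 E] [NormedAddCommGroup F] [NormedSpace 𝕜 F]
    {σ : E → F} {τ : F → E} {x : E} (hσ : DifferentiableAt 𝕜 σ x)
    (hτ : DifferentiableAt 𝕜 τ (σ x)) (hinv : ∀ᶠ y in 𝓝 x, τ (σ y) = y) :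
    (fderiv 𝕜 τ (σ x)).comp (fderiv 𝕜 σ x) = ContinuousLinearMap.id 𝕜 E := by
  rw [← fderiv_comp x hτ hσ, Filter.EventuallyEq.fderiv_eq (show τ ∘ σ =ᶠ[𝓝 x] id from hinv),
    fderiv_id]

namespace IsC1DiffeoGerm

variable {E : Type*} [NormedAddCommGroup E] [NormedSpace ℝ E] {σ : E → E}

theorem differentiableAt_zero (hσ : IsC1DiffeoGerm σ) : DifferentiableAt ℝ σ 0 := by
  obtain ⟨-, U, -, -, hU, -, h0U, -, -, -, -, -, hσU, -⟩ := hσ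
  exact (hσU.differentiableOn one_ne_zero).differentiableAt (hU.mem_nhds h0U)

theorem bijective_fderiv_zero (hσ : IsC1DiffeoGerm σ) : Function.Bijective (fderiv ℝ σ 0) := by
  have hσd := hσ.differentiableAt_zero
  obtain ⟨hσ0, U, V, τ, hU, hV, h0U, h0V, -, -, hτσ, hστ, -, hτV⟩ := hσ
  have hτ0 : τ 0 = 0 := by simpa [hσ0] using hτσ 0 h0U
  have hτd : DifferentiableAt ℝ τ 0 :=
    (hτV.differentiableOn one_ne_zero).differentiableAt (hV.mem_nhds h0V)
  have hleft := fderiv_comp_fderiv_eq_id_of_leftInverse hσd (by rwa [hσ0])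
    (eventually_of_mem (hU.mem_nhds h0U) hτσ)
  have hright := fderiv_comp_fderiv_eq_id_of_leftInverse hτd (by rwa [hτ0])
    (eventually_of_mem (hV.mem_nhds h0V) hστ)
  rw [hσ0] at hleft
  rw [hτ0] at hright
  refine Function.bijective_iff_has_inverse.mpr ⟨fderiv ℝ τ 0, fun x => ?_, fun x => ?_⟩
  · exact congrArg (· x) hleft
  · exact congrArg (· x) hright

end IsC1DiffeoGerm

theorem HasFDerivAt.tendsto_inv_smul_comp_smul {E F : Type*} [NormedAddCommGroup E]
    [NormedSpace ℝ E] [NormedAddCommGroup F] [NormedSpace ℝ F] {σ : E → F} {A : E →L[ℝ] F}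
    (hσ : HasFDerivAt σ A 0) (hσ0 : σ 0 = 0) (x : E) :
    Tendsto (fun t : ℝ => t⁻¹ • σ (t • x)) (𝓝[≠] 0) (𝓝 (A x)) := by
  have hray : HasDerivAt (fun t : ℝ => σ (t • x)) (A x) 0 := by
    have := (hasDerivAt_id (0 : ℝ)).smul_const x
    simp only [id, one_smul] at this
    exact (zero_smul ℝ x ▸ hσ).comp_hasDerivAt 0 this
  refine (hasDerivAt_iff_tendsto_slope.mp hray).congr fun t => ?_
  simp [slope_def_module, hσ0]

theorem eq_zero_of_tendsto_inv_pow_smul_of_lt {F : Type*} [NormedAddCommGroup F]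
    [NormedSpace ℝ F] {u : ℝ → F} {k m : ℕ} (hkm : k < m) {a b : F}
    (ha : Tendsto (fun t => (t ^ m)⁻¹ • u t) (𝓝[≠] 0) (𝓝 a))
    (hb : Tendsto (fun t => (t ^ k)⁻¹ • u t) (𝓝[≠] 0) (𝓝 b)) : b = 0 := by
  have hpow : Tendsto (fun t : ℝ => t ^ (m - k)) (𝓝[≠] 0) (𝓝 0) := by
    simpa [zero_pow (Nat.sub_ne_zero_of_lt hkm)] using
      ((continuous_pow (m - k)).tendsto (0 : ℝ)).mono_left nhdsWithin_le_nhds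
  have hk : Tendsto (fun t => (t ^ k)⁻¹ • u t) (𝓝[≠] 0) (𝓝 0) := by
    refine (zero_smul ℝ a ▸ hpow.smul ha).congr' ?_
    filter_upwards [self_mem_nhdsWithin] with t ht
    rw [smul_smul, pow_sub₀ _ ht hkm.le, mul_right_comm, mul_inv_cancel₀ (pow_ne_zero m ht),
      one_mul]
  exact tendsto_nhds_unique hb hk

theorem stmt0_general (n : ℕ) (f g : (Fin n → ℝ) → ℝ)
    (hf : AnalyticAt ℝ f 0) (hg : AnalyticAt ℝ g 0)
    (m k : ℕ)
    (hm : (∀ j < m, iteratedFDeriv ℝ j f 0 = 0) ∧ iteratedFDeriv ℝ m f 0 ≠ 0)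
    (hk : (∀ j < k, iteratedFDeriv ℝ j g 0 = 0) ∧ iteratedFDeriv ℝ k g 0 ≠ 0)
    (σ : (Fin n → ℝ) → (Fin n → ℝ)) (hσ : IsC1DiffeoGerm σ)
    (hfg : ∀ᶠ x in 𝓝 (0 : Fin n → ℝ), f x = g (σ x)) :
    k = m ∧ Function.Bijective (fderiv ℝ σ 0) ∧
      ∀ x : Fin n → ℝ,
        ((m.factorial : ℝ))⁻¹ • iteratedFDeriv ℝ m f 0 (fun _ => x) =
          ((m.factorial : ℝ))⁻¹ • iteratedFDeriv ℝ m g 0 (fun _ => fderiv ℝ σ 0 x) := by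
  have hA : Function.Bijective (fderiv ℝ σ 0) := hσ.bijective_fderiv_zero
  have hray_f (x : Fin n → ℝ) : Tendsto (fun t : ℝ => (t ^ m)⁻¹ • f (t • x)) (𝓝[≠] 0)
      (𝓝 ((m ! : ℝ)⁻¹ • iteratedFDeriv ℝ m f 0 (fun _ => x))) := by
    refine hf.tendsto_inv_pow_smul_comp hm.1 (tendsto_const_nhds.congr' ?_)
    filter_upwards [self_mem_nhdsWithin] with t ht
    exact (inv_smul_smul₀ ht x).symm
  have hray_g (x : Fin n → ℝ) : Tendsto (fun t : ℝ => (t ^ k)⁻¹ • f (t • x)) (𝓝[≠] 0)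
      (𝓝 ((k ! : ℝ)⁻¹ • iteratedFDeriv ℝ k g 0 (fun _ => fderiv ℝ σ 0 x))) := by
    refine (hg.tendsto_inv_pow_smul_comp hk.1
      (hσ.differentiableAt_zero.hasFDerivAt.tendsto_inv_smul_comp_smul hσ.1 x)).congr' ?_
    have hsmul : Tendsto (fun t : ℝ => t • x) (𝓝[≠] 0) (𝓝 0) :=
      ((continuous_id.smul continuous_const).tendsto' 0 0 (zero_smul ℝ x)).mono_left
        nhdsWithin_le_nhds
    filter_upwards [hsmul.eventually hfg] with t ht
    rw [ht]
  obtain ⟨xf, hxf⟩ := hf.exists_inv_factorial_smul_iteratedFDeriv_ne_zero hm.2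
  obtain ⟨yg, hyg⟩ := hg.exists_inv_factorial_smul_iteratedFDeriv_ne_zero hk.2
  obtain ⟨xg, rfl⟩ := hA.2 yg
  obtain rfl : k = m := by
    rcases lt_trichotomy k m with h | h | h
    · exact absurd (eq_zero_of_tendsto_inv_pow_smul_of_lt h (hray_f xg) (hray_g xg)) hyg
    · exact h
    · exact absurd (eq_zero_of_tendsto_inv_pow_smul_of_lt h (hray_g xf) (hray_f xf)) hxf
  exact ⟨rfl, hA, fun x => tendsto_nhds_unique (hray_f x) (hray_g x)⟩

/-- If `f = g ∘ σ` near the origin for a C¹ diffeomorphism germ `σ`, then the orders of `f`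
and `g` at the origin coincide and the initial homogeneous forms are linearly equivalent via
`A = Dσ(0)`, which is invertible. -/
theorem stmt0 (n : ℕ) (hn : 1 ≤ n) (f g : (Fin n → ℝ) → ℝ)
    (hf : AnalyticAt ℝ f 0) (hg : AnalyticAt ℝ g 0) (hf0 : f 0 = 0) (hg0 : g 0 = 0)
    (hfne : ¬ ∀ᶠ x in 𝓝 (0 : Fin n → ℝ), f x = 0)
    (hgne : ¬ ∀ᶠ x in 𝓝 (0 : Fin n → ℝ), g x = 0)
    (m k : ℕ)
    (hm : (∀ j < m, iteratedFDeriv ℝ j f 0 = 0) ∧ iteratedFDeriv ℝ m f 0 ≠ 0)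
    (hk : (∀ j < k, iteratedFDeriv ℝ j g 0 = 0) ∧ iteratedFDeriv ℝ k g 0 ≠ 0)
    (σ : (Fin n → ℝ) → (Fin n → ℝ)) (hσ : IsC1DiffeoGerm σ)
    (hfg : ∀ᶠ x in 𝓝 (0 : Fin n → ℝ), f x = g (σ x)) :
    k = m ∧ Function.Bijective (fderiv ℝ σ 0) ∧
      ∀ x : Fin n → ℝ,
        ((m.factorial : ℝ))⁻¹ • iteratedFDeriv ℝ m f 0 (fun _ => x) =
          ((m.factorial : ℝ))⁻¹ • iteratedFDeriv ℝ m g 0 (fun _ => fderiv ℝ σ 0 x) :=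
  stmt0_general n f g hf hg m k hm hk σ hσ hfg
end
end

section
/- Let σ : (ℝ²,0) → (ℝ²,0) be a bi-Lipschitz homeomorphism germ, let γ : x = λ(y) and γ̃ : x = λ̃(y) be allowable real analytic demi-branches, and suppose there exist ξ₀ > 1 and N > 0 such that σ(γ) ⊂ H_{ξ₀}(γ̃; N) as germs at the origin (i.e. for all sufficiently small y > 0 the point σ(λ(y), y) lies in H_{ξ₀}(γ̃; N)). Then for every ξ with 1 < ξ ≤ ξ₀ and every M > 0 there exist M̃ > 0 and a neighbourhood U₀ of the origin such that σ(H_ξ(γ; M) ∩ U₀) ⊂ H_ξ(γ̃; M̃). Moreover there is a constant A > 0, depending on σ, γ, γ̃ and ξ but not on M, such that M̃ can be taken equal to A·M when ξ < ξ₀ and equal to A·M + N when ξ = ξ₀. -/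
open Filter Topology

noncomputable section

/-- A bi-Lipschitz homeomorphism germ at the origin of the plane. -/
def IsBiLipschitzGerm (σ : ℝ × ℝ → ℝ × ℝ) : Prop :=
  σ 0 = 0 ∧ ∃ (U V : Set (ℝ × ℝ)) (τ : ℝ × ℝ → ℝ × ℝ) (K : NNReal),
    IsOpen U ∧ IsOpen V ∧ (0 : ℝ × ℝ) ∈ U ∧ (0 : ℝ × ℝ) ∈ V ∧
    Set.MapsTo σ U V ∧ Set.MapsTo τ V U ∧
    (∀ x ∈ U, τ (σ x) = x) ∧ (∀ y ∈ V, σ (τ y) = y) ∧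
    LipschitzOnWith K σ U ∧ LipschitzOnWith K τ V

/-- An allowable real analytic demi-branch `x = λ(y)`, `y ≥ 0`: `λ(y) = μ(y^{1/N})` for a real
analytic `μ` with `μ(0) = 0`, and `|λ(y)| ≤ C·y` near `0`. -/
def AllowableBranch (lam : ℝ → ℝ) : Prop :=
  ∃ (N : ℕ) (μ : ℝ → ℝ), 0 < N ∧ AnalyticAt ℝ μ 0 ∧ μ 0 = 0 ∧
    (∀ᶠ y in 𝓝[≥] (0 : ℝ), lam y = μ (y ^ ((N : ℝ)⁻¹))) ∧
    ∃ C > (0 : ℝ), ∀ᶠ y in 𝓝[≥] (0 : ℝ), |lam y| ≤ C * y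

/-- The horn neighbourhood `H_ξ(γ; N)` of the demi-branch `x = λ(y)`. -/
def Horn (ξ : ℝ) (lam : ℝ → ℝ) (N : ℝ) : Set (ℝ × ℝ) :=
  {p : ℝ × ℝ | 0 < p.2 ∧ |p.1 - lam p.2| ≤ N * p.2 ^ ξ}

/-!
Let `q = (λ(y), y)` be the point of `γ` at height `y`. A point `p ∈ H_ξ(γ; M)` at height `y` is
within `M y^ξ` of `q`, so `σ p` is within `t = K M y^ξ` of `σ q ∈ H_{ξ₀}(γ̃; N)`. Bi-Lipschitzness
makes the height `v` of `σ q` comparable to `y`, and since `t = o(y)` so is the height `v'` of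
`σ p`; hence `t ≤ C M v'^ξ`. An allowable branch is Lipschitz near `0` (it is `y G(y^{1/n})` with
`G` analytic), so `|(σ p)₁ - λ̃(v')| ≤ (1 + L) t + N v^{ξ₀}`, and `v^{ξ₀} ≤ v^{ξ₀-ξ} (v'^ξ + 2^ξ t)`.
For `ξ < ξ₀` the factor `N v^{ξ₀-ξ}` is eventually below `M`; for `ξ = ξ₀` it is `N`.
-/

open Set Asymptotics NNReal

lemma pow_mul_sub_le_pow_sub_pow {a b : ℝ} {n : ℕ} (hn : n ≠ 0) (hb : 0 ≤ b) (hba : b ≤ a)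
    (ha : a ≤ 1) : b ^ n * (a - b) ≤ a ^ n - b ^ n := by
  obtain ⟨m, rfl⟩ := Nat.exists_eq_succ_of_ne_zero hn
  have hbm : b ^ m ≤ a ^ m := pow_le_pow_left₀ hb hba m
  have hbm0 : 0 ≤ b ^ m := pow_nonneg hb m
  rw [pow_succ, pow_succ]
  nlinarith [mul_nonneg (mul_nonneg hbm0 (sub_nonneg.2 hba)) (by linarith : 0 ≤ 1 - b),
    mul_le_mul_of_nonneg_left hbm (hb.trans hba)]

lemma add_rpow_le_of_le {a h ξ : ℝ} (hξ : 1 ≤ ξ) (hh : 0 ≤ h) (hha : h ≤ a) :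
    (a + h) ^ ξ ≤ a ^ ξ + 2 ^ ξ * a ^ (ξ - 1) * h := by
  obtain rfl | ha := (hh.trans hha).eq_or_lt
  · obtain rfl : h = 0 := le_antisymm hha hh
    simp
  set d := h / a
  have hd : 0 ≤ d := div_nonneg hh ha.le
  have hd1 : d ≤ 1 := (div_le_one ha).2 hha
  have hconv := (convexOn_rpow hξ).2 (mem_Ici.2 ha.le) (mem_Ici.2 (by linarith : 0 ≤ 2 * a))
    (sub_nonneg.2 hd1) hd (by ring)
  have hcomb : (1 - d) • a + d • (2 * a) = a + h := by
    simp only [smul_eq_mul, d]; field_simp; ring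
  have hda : d * a ^ ξ = a ^ (ξ - 1) * h := by
    rw [Real.rpow_sub_one ha.ne']; simp only [d]; field_simp
  beta_reduce at hconv
  rw [hcomb, smul_eq_mul, smul_eq_mul, Real.mul_rpow zero_le_two ha.le] at hconv
  nlinarith [Real.rpow_nonneg ha.le ξ, Real.rpow_nonneg zero_le_two ξ]

lemma abs_pow_mul_sub_pow_mul_le {G : ℝ → ℝ} {n : ℕ} (hn : n ≠ 0) {ε : ℝ} (hε : ε ≤ 1)
    {K B : ℝ≥0} (hG : LipschitzOnWith K G (Icc 0 ε)) (hGB : ∀ s ∈ Icc 0 ε, |G s| ≤ B)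
    {a b : ℝ} (hb : 0 ≤ b) (hba : b ≤ a) (ha : a ≤ ε) :
    |a ^ n * G a - b ^ n * G b| ≤ (B + K) * (a ^ n - b ^ n) := by
  have hGa : |G a| ≤ B := hGB a ⟨hb.trans hba, ha⟩
  have hGab : |G a - G b| ≤ K * (a - b) := by
    simpa [Real.dist_eq, abs_of_nonneg (sub_nonneg.2 hba)] using
      hG.dist_le_mul a ⟨hb.trans hba, ha⟩ b ⟨hb, hba.trans ha⟩
  have hpow : b ^ n * (a - b) ≤ a ^ n - b ^ n :=
    pow_mul_sub_le_pow_sub_pow hn hb hba (ha.trans hε)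
  have hbn : 0 ≤ b ^ n := pow_nonneg hb n
  have hab : 0 ≤ a ^ n - b ^ n := sub_nonneg.2 (pow_le_pow_left₀ hb hba n)
  calc |a ^ n * G a - b ^ n * G b| = |(a ^ n - b ^ n) * G a + b ^ n * (G a - G b)| := by ring_nf
    _ ≤ (a ^ n - b ^ n) * |G a| + b ^ n * |G a - G b| := by
      refine (abs_add_le _ _).trans_eq ?_
      rw [abs_mul, abs_mul, abs_of_nonneg hab, abs_of_nonneg hbn]
    _ ≤ (a ^ n - b ^ n) * B + b ^ n * (K * (a - b)) := by gcongr
    _ ≤ (a ^ n - b ^ n) * B + K * (a ^ n - b ^ n) := by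
      rw [mul_left_comm]; gcongr
    _ = (B + K) * (a ^ n - b ^ n) := by ring

lemma lipschitzOnWith_mul_comp_rpow_inv {G : ℝ → ℝ} {n : ℕ} (hn : n ≠ 0) {ε : ℝ} (hε0 : 0 ≤ ε)
    (hε : ε ≤ 1) {K B : ℝ≥0} (hG : LipschitzOnWith K G (Icc 0 ε)) (hGB : ∀ s ∈ Icc 0 ε, |G s| ≤ B) :
    LipschitzOnWith (B + K) (fun y ↦ y * G (y ^ (n : ℝ)⁻¹)) (Icc 0 (ε ^ n)) := by
  refine LipschitzOnWith.of_dist_le_mul fun a ha b hb ↦ ?_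
  wlog hba : b ≤ a generalizing a b
  · rw [dist_comm, dist_comm a]
    exact this b hb a ha (le_of_not_ge hba)
  have hroot : ∀ y ∈ Icc 0 (ε ^ n), 0 ≤ y ^ (n : ℝ)⁻¹ ∧ (y ^ (n : ℝ)⁻¹) ^ n = y := fun y hy ↦
    ⟨Real.rpow_nonneg hy.1 _, Real.rpow_inv_natCast_pow hy.1 hn⟩
  have hmono : b ^ (n : ℝ)⁻¹ ≤ a ^ (n : ℝ)⁻¹ := Real.rpow_le_rpow hb.1 hba (by positivity)
  have haε : a ^ (n : ℝ)⁻¹ ≤ ε := by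
    simpa [Real.pow_rpow_inv_natCast hε0 hn] using
      Real.rpow_le_rpow ha.1 ha.2 (by positivity : (0 : ℝ) ≤ (n : ℝ)⁻¹)
  have := abs_pow_mul_sub_pow_mul_le hn hε hG hGB (hroot b hb).1 hmono haε
  rw [(hroot a ha).2, (hroot b hb).2] at this
  simpa [Real.dist_eq, abs_of_nonneg (sub_nonneg.2 hba)] using this

lemma le_analyticOrderAt_of_isBigO {μ : ℝ → ℝ} (hμ : AnalyticAt ℝ μ 0) {n : ℕ}
    (h : μ =O[𝓝[>] 0] (· ^ n)) : (n : ℕ∞) ≤ analyticOrderAt μ 0 := by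
  by_contra! hlt
  obtain ⟨k, hk⟩ := ENat.ne_top_iff_exists.mp (hlt.trans_le le_top).ne
  rw [← hk, Nat.cast_lt] at hlt
  obtain ⟨g, hg, hg0, hμg⟩ := hμ.analyticOrderAt_eq_natCast.mp hk.symm
  obtain ⟨c, hc⟩ := h.bound
  -- on `s > 0`, `g s = μ s / s ^ k = O(s ^ (n - k))`, which forces `g 0 = 0`
  have hgO : g =O[𝓝[>] 0] (· ^ (n - k)) := by
    refine IsBigO.of_bound c ?_
    filter_upwards [hc, self_mem_nhdsWithin, hμg.filter_mono nhdsWithin_le_nhds] with s hs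
      (hs0 : 0 < s) hμs
    have hsk : 0 < s ^ k := pow_pos hs0 k
    rw [hμs, ← pow_mul_pow_sub s hlt.le] at hs
    simp only [sub_zero, smul_eq_mul, norm_mul, norm_pow, Real.norm_eq_abs,
      abs_of_pos hs0] at hs ⊢
    rw [mul_left_comm] at hs
    exact le_of_mul_le_mul_left hs hsk
  have hpow : Tendsto (· ^ (n - k)) (𝓝[>] (0 : ℝ)) (𝓝 0) :=
    ((continuous_pow _).tendsto' 0 0 (zero_pow (Nat.sub_ne_zero_of_lt hlt))).mono_left
      nhdsWithin_le_nhds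
  exact hg0 (tendsto_nhds_unique hg.continuousAt.continuousWithinAt (hgO.trans_tendsto hpow))

theorem AllowableBranch.exists_eq_mul_comp_rpow_inv {lam : ℝ → ℝ} (h : AllowableBranch lam) :
    ∃ n : ℕ, n ≠ 0 ∧ ∃ G : ℝ → ℝ, AnalyticAt ℝ G 0 ∧
      ∀ᶠ y in 𝓝[≥] 0, lam y = y * G (y ^ (n : ℝ)⁻¹) := by
  obtain ⟨n, μ, hn, hμ, -, heq, C, -, hC⟩ := h
  have hpow : Tendsto (· ^ n) (𝓝[>] (0 : ℝ)) (𝓝[≥] 0) :=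
    tendsto_nhdsWithin_iff.2 ⟨((continuous_pow n).tendsto' 0 0 (zero_pow hn.ne')).mono_left
      nhdsWithin_le_nhds, eventually_nhdsWithin_of_forall fun s (hs : 0 < s) ↦ pow_nonneg hs.le n⟩
  have hO : μ =O[𝓝[>] 0] (· ^ n) := by
    refine IsBigO.of_bound C ?_
    filter_upwards [hpow.eventually (heq.and hC), self_mem_nhdsWithin] with s ⟨hs, hsC⟩
      (hs0 : 0 < s)
    rw [Real.pow_rpow_inv_natCast hs0.le hn.ne'] at hs
    simpa [← hs, abs_of_pos hs0] using hsC
  obtain ⟨G, hG, hμG⟩ := (natCast_le_analyticOrderAt hμ).mp (le_analyticOrderAt_of_isBigO hμ hO)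
  refine ⟨n, hn.ne', G, hG, ?_⟩
  have hroot : Tendsto (· ^ (n : ℝ)⁻¹) (𝓝[≥] (0 : ℝ)) (𝓝 0) := by
    simpa [Real.zero_rpow (inv_ne_zero (Nat.cast_ne_zero.2 hn.ne'))] using
      (Real.continuousAt_rpow_const 0 _ (Or.inr (inv_nonneg.2 n.cast_nonneg))).tendsto.mono_left
        nhdsWithin_le_nhds
  filter_upwards [heq, hroot.eventually hμG, self_mem_nhdsWithin] with y hy hyG hy0
  rw [hy, hyG, sub_zero, smul_eq_mul, Real.rpow_inv_natCast_pow hy0 hn.ne']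

lemma exists_lipschitzOnWith_mul_comp_rpow_inv {G : ℝ → ℝ} (hG : ContDiffAt ℝ 1 G 0) {n : ℕ}
    (hn : n ≠ 0) : ∃ L, ∃ δ > 0, LipschitzOnWith L (fun y ↦ y * G (y ^ (n : ℝ)⁻¹)) (Icc 0 δ) := by
  obtain ⟨K, t, ht, hK⟩ := hG.exists_lipschitzOnWith
  have hbdd : ∀ᶠ s in 𝓝 0, |G s| ≤ ‖G 0‖₊ + 1 := by
    simpa using hG.continuousAt.abs.eventually_lt continuousAt_const (lt_add_one |G 0|)
      |>.mono fun _ h ↦ h.le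
  obtain ⟨ε, hε, hεt⟩ :=
    mem_nhdsGE_iff_exists_Icc_subset.mp (mem_nhdsWithin_of_mem_nhds (inter_mem ht hbdd))
  have hsub : Icc 0 (min ε 1) ⊆ Icc 0 ε := Icc_subset_Icc_right (min_le_left _ _)
  refine ⟨‖G 0‖₊ + 1 + K, min ε 1 ^ n, by positivity, ?_⟩
  exact lipschitzOnWith_mul_comp_rpow_inv hn (by positivity) (min_le_right _ _)
    (hK.mono (hsub.trans fun s hs ↦ (hεt hs).1)) fun s hs ↦ (hεt (hsub hs)).2

theorem AllowableBranch.exists_lipschitzOnWith {lam : ℝ → ℝ} (h : AllowableBranch lam) :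
    ∃ L, ∃ δ > 0, LipschitzOnWith L lam (Icc 0 δ) := by
  obtain ⟨n, hn, G, hG, hlam⟩ := h.exists_eq_mul_comp_rpow_inv
  obtain ⟨L, δ, hδ, hL⟩ := exists_lipschitzOnWith_mul_comp_rpow_inv hG.contDiffAt hn
  obtain ⟨δ', hδ', hδ'lam⟩ := mem_nhdsGE_iff_exists_Icc_subset.mp hlam
  have hsub : Icc 0 (min δ δ') ⊆ Icc 0 δ := Icc_subset_Icc_right (min_le_left _ _)
  have hsub' : Icc 0 (min δ δ') ⊆ Icc 0 δ' := Icc_subset_Icc_right (min_le_right _ _)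
  refine ⟨L, min δ δ', lt_min hδ hδ', LipschitzOnWith.of_dist_le_mul fun a ha b hb ↦ ?_⟩
  rw [hδ'lam (hsub' ha), hδ'lam (hsub' hb)]
  exact hL.dist_le_mul a (hsub ha) b (hsub hb)

lemma tendsto_const_mul_rpow_nhds_zero (c : ℝ) {a : ℝ} (ha : 0 < a) :
    Tendsto (fun v : ℝ ↦ c * v ^ a) (𝓝 0) (𝓝 0) := by
  simpa [Real.zero_rpow ha.ne'] using
    ((Real.continuousAt_rpow_const 0 a (Or.inr ha.le)).const_mul c).tendsto

lemma eventually_mul_rpow_le_self (c : ℝ) {ξ : ℝ} (hξ : 1 < ξ) :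
    ∀ᶠ y in 𝓝[>] (0 : ℝ), c * y ^ ξ ≤ y := by
  filter_upwards [((tendsto_const_mul_rpow_nhds_zero c (sub_pos.2 hξ)).mono_left
    nhdsWithin_le_nhds).eventually (eventually_le_nhds one_pos), self_mem_nhdsWithin]
    with y hy1 (hy : 0 < y)
  calc c * y ^ ξ = c * y ^ (ξ - 1) * y := by
        rw [mul_assoc, Real.rpow_sub_one hy.ne', div_mul_cancel₀ _ hy.ne']
    _ ≤ 1 * y := by gcongr
    _ = y := one_mul y

theorem IsBiLipschitzGerm.exists_dist_le {σ : ℝ × ℝ → ℝ × ℝ} (hσ : IsBiLipschitzGerm σ) :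
    ∃ K > (0 : ℝ), ∃ U ∈ 𝓝 (0 : ℝ × ℝ), ∀ p ∈ U, ∀ q ∈ U,
      dist (σ p) (σ q) ≤ K * dist p q ∧ dist p q ≤ K * dist (σ p) (σ q) := by
  obtain ⟨-, U, V, τ, K, hU, -, hU0, -, hσUV, -, hτσ, -, hσK, hτK⟩ := hσ
  refine ⟨K + 1, by positivity, U, hU.mem_nhds hU0, fun p hp q hq ↦ ⟨?_, ?_⟩⟩
  · exact (hσK.dist_le_mul p hp q hq).trans (by gcongr; linarith)
  · calc dist p q = dist (τ (σ p)) (τ (σ q)) := by rw [hτσ p hp, hτσ q hq]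
      _ ≤ K * dist (σ p) (σ q) := hτK.dist_le_mul _ (hσUV hp) _ (hσUV hq)
      _ ≤ (K + 1) * dist (σ p) (σ q) := by gcongr; linarith

theorem IsBiLipschitzGerm.tendsto {σ : ℝ × ℝ → ℝ × ℝ} (hσ : IsBiLipschitzGerm σ) :
    Tendsto σ (𝓝 0) (𝓝 0) := by
  obtain ⟨hσ0, U, _, _, K, hU, -, hU0, -, -, -, -, -, hσK, -⟩ := hσ
  simpa [hσ0] using (hσK.continuousOn.continuousAt (hU.mem_nhds hU0)).tendsto

theorem AllowableBranch.tendsto_graph {lam : ℝ → ℝ} (h : AllowableBranch lam) :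
    Tendsto (fun y ↦ (lam y, y)) (𝓝[>] 0) (𝓝 0) := by
  obtain ⟨-, -, -, -, -, -, C, -, hC⟩ := h
  have hlam : Tendsto lam (𝓝[>] 0) (𝓝 0) := by
    refine squeeze_zero_norm' (nhdsWithin_mono _ Ioi_subset_Ici_self hC) ?_
    have hCy : Tendsto (fun y : ℝ ↦ C * y) (𝓝 0) (𝓝 0) := by
      simpa using (continuous_const_mul C).tendsto 0
    exact hCy.mono_left nhdsWithin_le_nhds
  rw [← Prod.mk_zero_zero]
  exact hlam.prodMk_nhds (tendsto_id.mono_left nhdsWithin_le_nhds)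

theorem exists_le_mul_snd_of_eventually_mem_horn {σ : ℝ × ℝ → ℝ × ℝ} {lam lam' : ℝ → ℝ}
    {ξ₀ N : ℝ} (hσ : IsBiLipschitzGerm σ) (hγ : AllowableBranch lam)
    (hγ' : AllowableBranch lam') (hξ₀ : 1 ≤ ξ₀) (hN : 0 ≤ N)
    (hincl : ∀ᶠ y in 𝓝[>] 0, σ (lam y, y) ∈ Horn ξ₀ lam' N) :
    ∃ B > (0 : ℝ), ∀ᶠ y in 𝓝[>] 0, y ≤ B * (σ (lam y, y)).2 := by
  obtain ⟨K, hK, U, hU, hKU⟩ := hσ.exists_dist_le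
  obtain ⟨-, -, -, -, -, -, C', hC', hC'b⟩ := hγ'
  have hq := hγ.tendsto_graph
  have hv : Tendsto (fun y ↦ (σ (lam y, y)).2) (𝓝[>] 0) (𝓝 0) := by
    simpa [Function.comp_def] using (continuous_snd.tendsto _).comp (hσ.tendsto.comp hq)
  refine ⟨K * (C' + N + 1), by positivity, ?_⟩
  filter_upwards [hincl, hq.eventually hU, hv.eventually (eventually_nhdsWithin_iff.mp hC'b),
    hv.eventually (eventually_le_nhds zero_lt_one), self_mem_nhdsWithin]
    with y ⟨hv0, hu⟩ hqU hlam' hv1 (hy : 0 < y)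
  set u := (σ (lam y, y)).1
  set v := (σ (lam y, y)).2
  have hu' : |u| ≤ (C' + N) * v := by
    have := abs_sub_abs_le_abs_sub u (lam' v)
    have := hlam' hv0.le
    have := mul_le_mul_of_nonneg_left (Real.rpow_le_self_of_le_one hv0.le hv1 hξ₀) hN
    linarith
  calc y ≤ ‖(lam y, y)‖ := (le_abs_self y).trans (norm_snd_le (lam y, y))
    _ = dist (lam y, y) 0 := (dist_zero_right _).symm
    _ ≤ K * dist (σ (lam y, y)) (σ 0) := (hKU _ hqU 0 (mem_of_mem_nhds hU)).2
    _ = K * max |u| |v| := by rw [hσ.1, dist_zero_right, Prod.norm_def]; rfl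
    _ ≤ K * ((C' + N + 1) * v) := by
        gcongr
        exact max_le (by linarith) (by rw [abs_of_pos hv0]; nlinarith)
    _ = K * (C' + N + 1) * v := by ring

lemma abs_sub_le_of_dist_le_of_mem_horn {lam' : ℝ → ℝ} {L' : ℝ≥0} {P Q : ℝ × ℝ}
    {t ξ ξ₀ N : ℝ} (hξ : 1 ≤ ξ) (hξξ₀ : ξ ≤ ξ₀) (hN : 0 ≤ N) (hQ : Q ∈ Horn ξ₀ lam' N)
    (hPQ : dist P Q ≤ t) (ht : 2 * t ≤ Q.2) (hQ1 : Q.2 ≤ 1) (hP1 : P.2 ≤ 1)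
    (hlip : |lam' Q.2 - lam' P.2| ≤ L' * |Q.2 - P.2|) :
    |P.1 - lam' P.2| ≤ (1 + L' + 2 ^ ξ * N) * t + N * Q.2 ^ (ξ₀ - ξ) * P.2 ^ ξ := by
  obtain ⟨hQ0, hQ⟩ := hQ
  rw [Prod.dist_eq, Real.dist_eq, Real.dist_eq, max_le_iff] at hPQ
  obtain ⟨h1, h2⟩ := hPQ
  obtain ⟨h2l, h2r⟩ := abs_le.mp h2
  have ht0 : 0 ≤ t := (abs_nonneg _).trans h1
  have hξpow : Q.2 ^ ξ ≤ P.2 ^ ξ + 2 ^ ξ * t :=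
    calc Q.2 ^ ξ ≤ (P.2 + t) ^ ξ := Real.rpow_le_rpow hQ0.le (by linarith) (by linarith)
      _ ≤ P.2 ^ ξ + 2 ^ ξ * P.2 ^ (ξ - 1) * t := add_rpow_le_of_le hξ ht0 (by linarith)
      _ ≤ P.2 ^ ξ + 2 ^ ξ * 1 * t := by
        gcongr
        exact Real.rpow_le_one (by linarith) hP1 (by linarith)
      _ = P.2 ^ ξ + 2 ^ ξ * t := by ring
  have hsplit : Q.2 ^ ξ₀ = Q.2 ^ (ξ₀ - ξ) * Q.2 ^ ξ := by
    rw [← Real.rpow_add hQ0, sub_add_cancel]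
  have hQξ : Q.2 ^ (ξ₀ - ξ) ≤ 1 := Real.rpow_le_one hQ0.le hQ1 (by linarith)
  have hNQ : N * Q.2 ^ ξ₀ ≤ N * Q.2 ^ (ξ₀ - ξ) * P.2 ^ ξ + 2 ^ ξ * N * t := by
    rw [hsplit]
    have := mul_le_mul_of_nonneg_left hξpow
      (mul_nonneg hN (Real.rpow_nonneg hQ0.le (ξ₀ - ξ)))
    nlinarith [mul_le_mul_of_nonneg_right hQξ (mul_nonneg (mul_nonneg hN ht0)
      (Real.rpow_nonneg zero_le_two ξ))]
  calc |P.1 - lam' P.2| ≤ |P.1 - Q.1| + |Q.1 - lam' Q.2| + |lam' Q.2 - lam' P.2| :=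
        by linarith [abs_sub_le P.1 Q.1 (lam' P.2), abs_sub_le Q.1 (lam' Q.2) (lam' P.2)]
    _ ≤ t + N * Q.2 ^ ξ₀ + L' * t := by
      gcongr
      exact hlip.trans (by rw [abs_sub_comm]; gcongr)
    _ ≤ _ := by linarith

lemma mem_horn_of_dist_le_of_mem_horn {lam lam' : ℝ → ℝ} {L' : ℝ≥0} {δ K B M N ξ ξ₀ : ℝ}
    {p P Q : ℝ × ℝ} (hξ : 1 ≤ ξ) (hξξ₀ : ξ ≤ ξ₀) (hN : 0 ≤ N) (hK : 0 ≤ K) (hB : 0 < B)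
    (hL' : LipschitzOnWith L' lam' (Icc 0 δ)) (hp : p ∈ Horn ξ lam M) (hQ : Q ∈ Horn ξ₀ lam' N)
    (hPQ : dist P Q ≤ K * dist p (lam p.2, p.2)) (hpQ : p.2 ≤ B * Q.2)
    (hpK : 2 * B * (K * M) * p.2 ^ ξ ≤ p.2) (hQδ : Q.2 ≤ min δ 1) (hPδ : P.2 ≤ min δ 1)
    (hQM : ξ < ξ₀ → N * Q.2 ^ (ξ₀ - ξ) ≤ M) :
    P ∈ Horn ξ lam' ((1 + L' + 2 ^ ξ * N) * K * (2 * B) ^ ξ * M +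
      if ξ < ξ₀ then M else M + N) := by
  obtain ⟨hy, hx⟩ := hp
  have hM : 0 ≤ M := nonneg_of_mul_nonneg_left ((abs_nonneg _).trans hx) (Real.rpow_pos_of_pos hy ξ)
  set t := K * M * p.2 ^ ξ
  have hPQ' : dist P Q ≤ t := by
    have hpq : dist p (lam p.2, p.2) = |p.1 - lam p.2| := by simp [Prod.dist_eq, Real.dist_eq]
    calc dist P Q ≤ K * dist p (lam p.2, p.2) := hPQ
      _ ≤ K * (M * p.2 ^ ξ) := by rw [hpq]; gcongr
      _ = t := by ring
  have h2t : 2 * t ≤ Q.2 := le_of_mul_le_mul_left (by linarith) hB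
  have hQP : |Q.2 - P.2| ≤ t := by
    have := (le_max_right _ _).trans (Prod.dist_eq.symm.le.trans hPQ')
    rwa [Real.dist_eq, abs_sub_comm] at this
  have hQ2 : Q.2 ≤ 2 * P.2 := by linarith [(abs_le.mp hQP).2]
  have hP0 : 0 < P.2 := by linarith [hQ.1]
  have hest := abs_sub_le_of_dist_le_of_mem_horn hξ hξξ₀ hN hQ hPQ' h2t
    (hQδ.trans (min_le_right _ _)) (hPδ.trans (min_le_right _ _)) (by
      simpa only [Real.dist_eq] using hL'.dist_le_mul Q.2 ⟨hQ.1.le, hQδ.trans (min_le_left _ _)⟩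
        P.2 ⟨hP0.le, hPδ.trans (min_le_left _ _)⟩)
  have ht : t ≤ K * M * (2 * B) ^ ξ * P.2 ^ ξ :=
    calc t ≤ K * M * (2 * B * P.2) ^ ξ := by simp only [t]; gcongr; nlinarith
      _ = K * M * (2 * B) ^ ξ * P.2 ^ ξ := by rw [Real.mul_rpow (by positivity) hP0.le]; ring
  have hQpow : N * Q.2 ^ (ξ₀ - ξ) ≤ if ξ < ξ₀ then M else M + N := by
    split_ifs with hlt
    · exact hQM hlt
    · linarith [mul_le_of_le_one_right hN
        (Real.rpow_le_one hQ.1.le (hQδ.trans (min_le_right _ _)) (by linarith : 0 ≤ ξ₀ - ξ))]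
  refine ⟨hP0, hest.trans ?_⟩
  calc (1 + L' + 2 ^ ξ * N) * t + N * Q.2 ^ (ξ₀ - ξ) * P.2 ^ ξ
      ≤ (1 + L' + 2 ^ ξ * N) * (K * M * (2 * B) ^ ξ * P.2 ^ ξ)
        + (if ξ < ξ₀ then M else M + N) * P.2 ^ ξ := by gcongr
    _ = _ := by ring

theorem eventually_mem_horn {σ : ℝ × ℝ → ℝ × ℝ} {lam lam' : ℝ → ℝ} {ξ ξ₀ N : ℝ}
    (hσ : IsBiLipschitzGerm σ) (hγ : AllowableBranch lam) (hγ' : AllowableBranch lam')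
    (hξ : 1 < ξ) (hξξ₀ : ξ ≤ ξ₀) (hN : 0 ≤ N)
    (hincl : ∀ᶠ y in 𝓝[>] 0, σ (lam y, y) ∈ Horn ξ₀ lam' N) :
    ∃ A > (0 : ℝ), ∀ M > (0 : ℝ), ∀ᶠ p in 𝓝 (0 : ℝ × ℝ), p ∈ Horn ξ lam M →
      σ p ∈ Horn ξ lam' (if ξ < ξ₀ then A * M else A * M + N) := by
  obtain ⟨K, hK, U, hU, hKU⟩ := hσ.exists_dist_le
  obtain ⟨L', δ, hδ, hL'⟩ := hγ'.exists_lipschitzOnWith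
  obtain ⟨B, hB, hyB⟩ :=
    exists_le_mul_snd_of_eventually_mem_horn hσ hγ hγ' (hξ.le.trans hξξ₀) hN hincl
  refine ⟨(1 + L' + 2 ^ ξ * N) * K * (2 * B) ^ ξ + 1, by positivity, fun M hM ↦ ?_⟩
  have hq := hγ.tendsto_graph
  have hsnd : Tendsto (fun p : ℝ × ℝ ↦ (σ p).2) (𝓝 0) (𝓝 0) := by
    simpa [Function.comp_def] using (continuous_snd.tendsto _).comp hσ.tendsto
  have hQM : ∀ᶠ v in 𝓝 (0 : ℝ), ξ < ξ₀ → N * v ^ (ξ₀ - ξ) ≤ M := by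
    by_cases hlt : ξ < ξ₀
    · filter_upwards [(tendsto_const_mul_rpow_nhds_zero N (sub_pos.2 hlt)).eventually
        (eventually_le_nhds hM)] with v hv using fun _ ↦ hv
    · exact .of_forall fun _ h ↦ absurd h hlt
  have hbranch : ∀ᶠ y in 𝓝[>] 0, (lam y, y) ∈ U ∧ y ≤ B * (σ (lam y, y)).2 ∧
      σ (lam y, y) ∈ Horn ξ₀ lam' N ∧ ((σ (lam y, y)).2 ≤ min δ 1 ∧
        (ξ < ξ₀ → N * (σ (lam y, y)).2 ^ (ξ₀ - ξ) ≤ M)) ∧ 2 * B * (K * M) * y ^ ξ ≤ y := by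
    filter_upwards [hq.eventually hU, hyB, hincl,
      (hsnd.comp hq).eventually ((eventually_le_nhds (lt_min hδ one_pos)).and hQM),
      eventually_mul_rpow_le_self _ hξ] with y hqU hyv hQ hv hyK
    exact ⟨hqU, hyv, hQ, hv, hyK⟩
  filter_upwards [hU, hsnd.eventually (eventually_le_nhds (lt_min hδ one_pos)),
    (continuous_snd.tendsto 0).eventually (eventually_nhdsWithin_iff.mp hbranch)]
    with p hpU hPδ hpy hp
  obtain ⟨hqU, hpQ, hQ, ⟨hQδ, hQM⟩, hpK⟩ := hpy hp.1
  convert mem_horn_of_dist_le_of_mem_horn hξ.le hξξ₀ hN hK.le hB hL' hp hQ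
    (hKU p hpU _ hqU).1 hpQ hpK hQδ hPδ hQM using 2
  split_ifs <;> ring

theorem stmt3_general (σ : ℝ × ℝ → ℝ × ℝ) (hσ : IsBiLipschitzGerm σ)
    (lam lam' : ℝ → ℝ) (hγ : AllowableBranch lam) (hγ' : AllowableBranch lam')
    (ξ₀ N : ℝ) (hN : 0 < N)
    (hincl : ∀ᶠ y in 𝓝[>] (0 : ℝ), σ (lam y, y) ∈ Horn ξ₀ lam' N) :
    ∀ ξ : ℝ, 1 < ξ → ξ ≤ ξ₀ →
      ∃ A > (0 : ℝ), ∀ M > (0 : ℝ), ∃ U₀ : Set (ℝ × ℝ), IsOpen U₀ ∧ (0 : ℝ × ℝ) ∈ U₀ ∧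
        ∀ p ∈ Horn ξ lam M ∩ U₀,
          σ p ∈ Horn ξ lam' (if ξ < ξ₀ then A * M else A * M + N) := by
  intro ξ hξ hξξ₀
  obtain ⟨A, hA, hAM⟩ := eventually_mem_horn hσ hγ hγ' hξ hξξ₀ hN.le hincl
  refine ⟨A, hA, fun M hM ↦ ?_⟩
  obtain ⟨U₀, hU₀, hU₀o, h0⟩ := eventually_nhds_iff.mp (hAM M hM)
  exact ⟨U₀, hU₀o, h0, fun p ⟨hp, hpU⟩ ↦ hU₀ p hpU hp⟩

/-- If a bi-Lipschitz germ `σ` sends the demi-branch `γ` into the horn `H_{ξ₀}(γ̃; N)`, then,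
for `1 < ξ ≤ ξ₀`, it sends horn neighbourhoods `H_ξ(γ; M)` into horn neighbourhoods
`H_ξ(γ̃; M̃)`, with `M̃ = A·M` for `ξ < ξ₀` and `M̃ = A·M + N` for `ξ = ξ₀`, where `A` does
not depend on `M`. -/
theorem stmt3 (σ : ℝ × ℝ → ℝ × ℝ) (hσ : IsBiLipschitzGerm σ)
    (lam lam' : ℝ → ℝ) (hγ : AllowableBranch lam) (hγ' : AllowableBranch lam')
    (ξ₀ N : ℝ) (hξ₀ : 1 < ξ₀) (hN : 0 < N)
    (hincl : ∀ᶠ y in 𝓝[>] (0 : ℝ), σ (lam y, y) ∈ Horn ξ₀ lam' N) :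
    ∀ ξ : ℝ, 1 < ξ → ξ ≤ ξ₀ →
      ∃ A > (0 : ℝ), ∀ M > (0 : ℝ), ∃ U₀ : Set (ℝ × ℝ), IsOpen U₀ ∧ (0 : ℝ × ℝ) ∈ U₀ ∧
        ∀ p ∈ Horn ξ lam M ∩ U₀,
          σ p ∈ Horn ξ lam' (if ξ < ξ₀ then A * M else A * M + N) :=
  stmt3_general σ hσ lam lam' hγ hγ' ξ₀ N hN hincl
end
end

section
/- Let ξ ≥ 1, e ∈ ℝ, let P ∈ ℝ[z] be a polynomial, and let g be a real-valued function defined on {(x, y) : |x| < δ, 0 < y < δ} for some δ > 0 such that for every R > 0, sup_{|z| ≤ R} |g(z·y^ξ, y) − P(z)·y^e| = o(y^e) as y → 0⁺. Let α, β : (0, δ) → ℝ satisfy α(y) = o(y) and β(y) = o(y) as y → 0⁺. Then for every R > 0, sup_{|z| ≤ R} |g((z + α(y))·y^ξ, y + β(y)) − P(z)·y^e| = o(y^e) as y → 0⁺. -/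
/-!
Dividing by `y ^ e`, the hypothesis says that `F y z = g (z * y ^ ξ, y) / y ^ e` tends to `P z`
uniformly on bounded sets as `y → 0⁺`. With `y' = y + β y` and
`w = (z + α y) * (y' / y) ^ (-ξ)` one has `(z + α y) * y ^ ξ = w * y' ^ ξ`, so the perturbed
quotient equals `F y' w * (y' / y) ^ e`. As `y' → 0⁺`, `y' / y → 1` and `w → z` uniformly on
bounded sets, uniform continuity of `P` on compact sets gives `F y' w → P z` uniformly, and the
factor `(y' / y) ^ e → 1` is harmless because `P` is bounded there.
-/

open Filter Topology Asymptotics Polynomial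

noncomputable section

open Metric Set

section UniformConvergence

variable {ι κ α β : Type*}

theorem tendstoUniformlyOn_div_iff {h : ι → α → ℝ} {f : α → ℝ} {v : ι → ℝ} {l : Filter ι}
    {s : Set α} (hv : ∀ᶠ i in l, 0 < v i) :
    TendstoUniformlyOn (fun i z => h i z / v i) f l s ↔
      ∀ ε > 0, ∀ᶠ i in l, ∀ z ∈ s, |h i z - f z * v i| ≤ ε * v i := by
  have key {a b w : ℝ} (hw : 0 < w) : |a - b * w| = dist b (a / w) * w := by
    rw [Real.dist_eq, abs_sub_comm, ← abs_of_pos hw, ← abs_mul, abs_of_pos hw]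
    congr 1
    field_simp
  rw [Metric.tendstoUniformlyOn_iff]
  constructor
  · intro H ε hε
    filter_upwards [H ε hε, hv] with i hi hvi z hz
    rw [key hvi]
    exact mul_le_mul_of_nonneg_right (hi z hz).le hvi.le
  · intro H ε hε
    filter_upwards [H (ε / 2) (half_pos hε), hv] with i hi hvi z hz
    have := hi z hz
    rw [key hvi] at this
    linarith [le_of_mul_le_mul_right this hvi]

theorem TendstoUniformlyOn.comp_of_tendstoUniformlyOn_id [UniformSpace α] [UniformSpace β]
    {F : ι → α → β} {f : α → β} {p : Filter ι} {S s : Set α} {b : κ → ι} {p' : Filter κ}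
    {w : κ → α → α} (hF : TendstoUniformlyOn F f p S) (hf : UniformContinuousOn f S)
    (hb : Tendsto b p' p) (hw : TendstoUniformlyOn w id p' s)
    (hwS : ∀ᶠ k in p', ∀ z ∈ s, w k z ∈ S) (hsS : s ⊆ S) :
    TendstoUniformlyOn (fun k z => F (b k) (w k z)) f p' s := by
  intro u hu
  obtain ⟨v, hv, hvu⟩ := comp_mem_uniformity_sets hu
  have hfw := hf.comp_tendstoUniformlyOn_eventually hwS (fun z hz => hsS hz) hw
  filter_upwards [hfw v hv, hb.eventually (hF v hv), hwS] with k hfk hFk hk z hz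
  exact hvu (SetRel.prodMk_mem_comp (hfk z hz) (hFk _ (hk z hz)))

theorem TendstoUniformlyOn.eventually_mem_closedBall_add [PseudoMetricSpace α]
    {w : ι → α → α} {l : Filter ι} {x : α} {r δ : ℝ}
    (hw : TendstoUniformlyOn w id l (closedBall x r)) (hδ : 0 < δ) :
    ∀ᶠ i in l, ∀ z ∈ closedBall x r, w i z ∈ closedBall x (r + δ) := by
  filter_upwards [Metric.tendstoUniformlyOn_iff.1 hw δ hδ] with i hi z hz
  have : dist z (w i z) < δ := hi z hz
  rw [mem_closedBall] at hz ⊢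
  linarith [dist_triangle (w i z) z x, dist_comm z (w i z)]

theorem TendstoUniformlyOn.mul_tendsto_one {𝕜 : Type*} [NormedField 𝕜] {F : ι → α → 𝕜}
    {f : α → 𝕜} {c : ι → 𝕜} {l : Filter ι} {s : Set α} {C : ℝ}
    (hF : TendstoUniformlyOn F f l s) (hfC : ∀ z ∈ s, ‖f z‖ ≤ C) (hc : Tendsto c l (𝓝 1)) :
    TendstoUniformlyOn (fun i z => F i z * c i) f l s := by
  rw [Metric.tendstoUniformlyOn_iff] at hF ⊢
  intro ε hε
  set K := |C| + 1
  have hK : 0 < K := by positivity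
  have hδ : 0 < min 1 (ε / (4 * K)) := by positivity
  filter_upwards [hF (ε / 4) (by positivity), hc.eventually (ball_mem_nhds 1 hδ)]
    with i hi hci z hz
  rw [dist_eq_norm, lt_min_iff] at hci
  have hc2 : ‖c i‖ ≤ 2 := by
    linarith [norm_le_norm_add_norm_sub' (c i) 1, norm_one (α := 𝕜)]
  have hfK : ‖f z‖ ≤ K := (hfC z hz).trans ((le_abs_self C).trans (by linarith))
  have hFz : ‖f z - F i z‖ < ε / 4 := by rw [← dist_eq_norm]; exact hi z hz
  rw [dist_eq_norm, show f z - F i z * c i = (f z - F i z) * c i - f z * (c i - 1) by ring]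
  calc ‖(f z - F i z) * c i - f z * (c i - 1)‖
      ≤ ‖f z - F i z‖ * ‖c i‖ + ‖f z‖ * ‖c i - 1‖ := by
        refine (norm_sub_le _ _).trans ?_
        rw [norm_mul, norm_mul]
    _ ≤ ε / 4 * 2 + K * (ε / (4 * K)) := by gcongr; exact hci.2.le
    _ < ε := by field_simp; linarith

theorem tendstoUniformly_add_of_tendsto_zero [SeminormedAddGroup α] {a : ι → α}
    {l : Filter ι} (ha : Tendsto a l (𝓝 0)) :
    TendstoUniformly (fun i z => z + a i) id l := by
  rw [Metric.tendstoUniformly_iff]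
  intro ε hε
  filter_upwards [ha.eventually (ball_mem_nhds 0 hε)] with i hi z
  simpa [dist_eq_norm] using hi

theorem tendstoUniformlyOn_comp_add_mul {𝕜 : Type*} [NormedField 𝕜] [ProperSpace 𝕜]
    [UniformSpace β] {F : ι → 𝕜 → β} {f : 𝕜 → β} {p : Filter ι} {p' : Filter κ} {b : κ → ι}
    {a c : κ → 𝕜} (hF : ∀ R > 0, TendstoUniformlyOn F f p (closedBall 0 R)) (hf : Continuous f)
    (hb : Tendsto b p' p) (ha : Tendsto a p' (𝓝 0)) (hc : Tendsto c p' (𝓝 1)) {R : ℝ}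
    (hR : 0 ≤ R) :
    TendstoUniformlyOn (fun k z => F (b k) ((z + a k) * c k)) f p' (closedBall 0 R) := by
  have hw : TendstoUniformlyOn (fun k z => (z + a k) * c k) id p' (closedBall 0 R) :=
    (tendstoUniformly_add_of_tendsto_zero ha).tendstoUniformlyOn.mul_tendsto_one
      (fun z hz => mem_closedBall_zero_iff.1 hz) hc
  exact (hF (R + 1) (by linarith)).comp_of_tendstoUniformlyOn_id
    ((isCompact_closedBall 0 (R + 1)).uniformContinuousOn_of_continuous hf.continuousOn) hb hw
    (hw.eventually_mem_closedBall_add one_pos) (closedBall_subset_closedBall (by linarith))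

end UniformConvergence

section LittleOPerturbation

theorem tendsto_add_div_self_of_isLittleO {𝕜 : Type*} [NormedField 𝕜] {β : 𝕜 → 𝕜}
    {l : Filter 𝕜} (hβ : β =o[l] fun y => y) (hl : ∀ᶠ y in l, y ≠ 0) :
    Tendsto (fun y => (y + β y) / y) l (𝓝 1) := by
  have h := tendsto_const_nhds (x := (1 : 𝕜)).add hβ.tendsto_div_nhds_zero
  rw [add_zero] at h
  refine h.congr' ?_
  filter_upwards [hl] with y hy
  rw [add_div, div_self hy]

variable {β : ℝ → ℝ}

theorem tendsto_add_div_self_rpow_of_isLittleO (hβ : β =o[𝓝[>] 0] fun y => y) (q : ℝ) :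
    Tendsto (fun y => ((y + β y) / y) ^ q) (𝓝[>] 0) (𝓝 1) := by
  have hne : ∀ᶠ y in 𝓝[>] (0 : ℝ), y ≠ 0 :=
    eventually_mem_nhdsWithin.mono fun _ hy => (mem_Ioi.1 hy).ne'
  simpa using (tendsto_add_div_self_of_isLittleO hβ hne).rpow_const (Or.inl one_ne_zero)

theorem tendsto_add_nhdsGT_of_isLittleO (hβ : β =o[𝓝[>] 0] fun y => y) :
    Tendsto (fun y => y + β y) (𝓝[>] 0) (𝓝[>] 0) := by
  have hpos : ∀ᶠ y in 𝓝[>] (0 : ℝ), 0 < y := self_mem_nhdsWithin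
  have hid : Tendsto (fun y : ℝ => y) (𝓝[>] 0) (𝓝 0) :=
    tendsto_nhdsWithin_of_tendsto_nhds tendsto_id
  refine tendsto_nhdsWithin_iff.2 ⟨by simpa using hid.add (hβ.trans_tendsto hid), ?_⟩
  have hratio := tendsto_add_div_self_of_isLittleO hβ (hpos.mono fun y hy => hy.ne')
  filter_upwards [hratio.eventually (lt_mem_nhds one_pos), hpos] with y hy hy0
  exact (div_pos_iff_of_pos_right hy0).1 hy

end LittleOPerturbation

theorem stmt6_general (ξ e : ℝ) (P : Polynomial ℝ) (g : ℝ × ℝ → ℝ)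
    (hg : ∀ R > (0 : ℝ), ∀ ε > (0 : ℝ), ∀ᶠ y in 𝓝[>] (0 : ℝ), ∀ z : ℝ, |z| ≤ R →
      |g (z * y ^ ξ, y) - P.eval z * y ^ e| ≤ ε * y ^ e)
    (α β : ℝ → ℝ)
    (hα : (fun y => α y) =o[𝓝[>] (0 : ℝ)] fun y => y)
    (hβ : (fun y => β y) =o[𝓝[>] (0 : ℝ)] fun y => y) :
    ∀ R > (0 : ℝ), ∀ ε > (0 : ℝ), ∀ᶠ y in 𝓝[>] (0 : ℝ), ∀ z : ℝ, |z| ≤ R →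
      |g ((z + α y) * y ^ ξ, y + β y) - P.eval z * y ^ e| ≤ ε * y ^ e := by
  have hpos : ∀ᶠ y in 𝓝[>] (0 : ℝ), 0 < y := self_mem_nhdsWithin
  have hpos_e : ∀ᶠ y in 𝓝[>] (0 : ℝ), 0 < y ^ e :=
    hpos.mono fun y hy => Real.rpow_pos_of_pos hy e
  have hball (R : ℝ) : {z : ℝ | |z| ≤ R} = closedBall 0 R := by ext; simp
  have hF (R : ℝ) (hR : 0 < R) : TendstoUniformlyOn (fun y z => g (z * y ^ ξ, y) / y ^ e)
      P.eval (𝓝[>] 0) (closedBall 0 R) := by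
    rw [← hball]
    exact (tendstoUniformlyOn_div_iff hpos_e).2 (hg R hR)
  have hy' := tendsto_add_nhdsGT_of_isLittleO hβ
  have hα0 : Tendsto α (𝓝[>] 0) (𝓝 0) :=
    hα.trans_tendsto (tendsto_nhdsWithin_of_tendsto_nhds tendsto_id)
  intro R hR
  obtain ⟨C, hC⟩ := (isCompact_closedBall (0 : ℝ) R).exists_bound_of_continuousOn
    P.continuous.continuousOn
  have hlim := (tendstoUniformlyOn_comp_add_mul hF P.continuous hy' hα0
    (tendsto_add_div_self_rpow_of_isLittleO hβ (-ξ)) hR.le).mul_tendsto_one hC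
    (tendsto_add_div_self_rpow_of_isLittleO hβ e)
  refine (tendstoUniformlyOn_div_iff (s := {z : ℝ | |z| ≤ R}) hpos_e).1 ?_
  rw [hball]
  refine hlim.congr ?_
  filter_upwards [hpos, hy'.eventually self_mem_nhdsWithin] with y hy hy'pos z _
  simp only [Real.rpow_neg (div_pos hy'pos hy).le, Real.div_rpow hy'pos.le hy.le, inv_div,
    mul_assoc, div_mul_cancel₀ _ (Real.rpow_pos_of_pos hy'pos ξ).ne']
  field_simp

/-- Substitution lemma: the expansion `g(z·y^ξ, y) = P(z)·y^e + o(y^e)` (uniformly on compact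
sets of `z`) is stable under perturbations `z ↦ z + α(y)`, `y ↦ y + β(y)` with
`α(y) = o(y)`, `β(y) = o(y)`. -/
theorem stmt6 (ξ e : ℝ) (hξ : 1 ≤ ξ) (P : Polynomial ℝ) (g : ℝ × ℝ → ℝ)
    (hg : ∀ R > (0 : ℝ), ∀ ε > (0 : ℝ), ∀ᶠ y in 𝓝[>] (0 : ℝ), ∀ z : ℝ, |z| ≤ R →
      |g (z * y ^ ξ, y) - P.eval z * y ^ e| ≤ ε * y ^ e)
    (α β : ℝ → ℝ)
    (hα : (fun y => α y) =o[𝓝[>] (0 : ℝ)] fun y => y)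
    (hβ : (fun y => β y) =o[𝓝[>] (0 : ℝ)] fun y => y) :
    ∀ R > (0 : ℝ), ∀ ε > (0 : ℝ), ∀ᶠ y in 𝓝[>] (0 : ℝ), ∀ z : ℝ, |z| ≤ R →
      |g ((z + α y) * y ^ ξ, y + β y) - P.eval z * y ^ e| ≤ ε * y ^ e :=
  stmt6_general ξ e P g hg α β hα hβ

end
end

section
/- Let σ : (ℝ²,0) → (ℝ²,0) be a C¹ diffeomorphism germ with Dσ(0) = Id, and let f, g : (ℝ²,0) → (ℝ,0) be real analytic germs, mini-regular in x, with f = g ∘ σ on a neighbourhood of the origin. Let γ : x = λ(y) and γ̃ : x = λ̃(y) be allowable real analytic demi-branches and suppose there exist ξ₀ ≥ 1 and N > 0 with σ(γ) ⊂ H_{ξ₀}(γ̃; N) as germs at the origin. Fix ξ with 1 ≤ ξ ≤ ξ₀ and suppose f admits along γ the expansion (e, P) at rate ξ and g admits along γ̃ the expansion (ẽ, Q) at rate ξ, with P and Q nonzero polynomials. Then e = ẽ; if moreover ξ < ξ₀ then P = Q, while if ξ = ξ₀ then P and Q have the same degree and the same leading coefficient. -/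
open Filter Topology Polynomial

noncomputable section

/-- `f` admits along the demi-branch `x = λ(y)` the expansion `(e, P)` at rate `ξ`. -/
def AdmitsExpansion (f : ℝ × ℝ → ℝ) (lam : ℝ → ℝ) (ξ e : ℝ) (P : Polynomial ℝ) : Prop :=
  ∀ R > (0 : ℝ), ∀ ε > (0 : ℝ), ∀ᶠ y in 𝓝[>] (0 : ℝ), ∀ z : ℝ, |z| ≤ R →
    |f (lam y + z * y ^ ξ, y) - P.eval z * y ^ e| ≤ ε * y ^ e

/-- `f` is mini-regular in `x`: its initial homogeneous form does not vanish at `(1,0)`. -/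
def MiniRegularInX (f : ℝ × ℝ → ℝ) : Prop :=
  ∃ m : ℕ, (∀ j < m, iteratedFDeriv ℝ j f 0 = 0) ∧
    iteratedFDeriv ℝ m f 0 (fun _ => ((1 : ℝ), (0 : ℝ))) ≠ 0

/-!
Since `σ` is `C¹` with `Dσ(0) = Id`, it is strictly differentiable at the origin with derivative
`Id`. Hence the point at horn coordinate `z` over `γ` and height `y` is sent to a point of height
`t = y (1 + o(1))` whose horn coordinate over `γ̃` is `z + c(y) + o(1)`, where `c(y)` is the horn
coordinate of `σ(λ(y), y)`; the difference of the values of `λ̃` at the two heights involved is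
controlled because an allowable branch is `y · h(y^{1/N})` with `h` analytic, hence Lipschitz
near `0⁺`. The horn inclusion gives `|c(y)| ≤ N t^{ξ₀ - ξ}`, so `c` converges to some `c₀` along an
ultrafilter (and to `0` when `ξ < ξ₀`). Evaluating `f = g ∘ σ` along it yields
`P(z) y^e ~ Q(z + c₀) y^{e'}` for every `z`, whence `e = e'` and `P(X) = Q(X + c₀)`.
-/

open Asymptotics

theorem IsC1DiffeoGerm.hasStrictFDerivAt {E : Type*} [NormedAddCommGroup E] [NormedSpace ℝ E]
    {σ : E → E} (hσ : IsC1DiffeoGerm σ) : HasStrictFDerivAt σ (fderiv ℝ σ 0) 0 := by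
  obtain ⟨-, U, -, -, hU, -, hU0, -, -, -, -, -, hC1, -⟩ := hσ
  exact (hC1.contDiffAt (hU.mem_nhds hU0)).hasStrictFDerivAt one_ne_zero

theorem isLittleO_image_sub_image {E : Type*} [NormedAddCommGroup E] [NormedSpace ℝ E]
    {τ : E → E} {x : E} (hτ : HasStrictFDerivAt τ (ContinuousLinearMap.id ℝ E) x)
    {α : Type*} {l : Filter α} {p q : α → E} (hp : Tendsto p l (𝓝 x)) (hq : Tendsto q l (𝓝 x)) :
    (fun i => τ (p i) - τ (q i) - (p i - q i)) =o[l] fun i => p i - q i :=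
  hτ.isLittleO.comp_tendsto (hp.prodMk_nhds hq)

theorem tendsto_rpow_of_tendsto_nhdsGT_zero {α : Type*} {l : Filter α} {t : α → ℝ} {d : ℝ}
    (ht : Tendsto t l (𝓝[>] 0)) (hd : 0 < d) : Tendsto (fun i => t i ^ d) l (𝓝 0) := by
  simpa [Real.zero_rpow hd.ne'] using
    (tendsto_nhds_of_tendsto_nhdsWithin ht).rpow_const (Or.inr hd.le)

theorem limits_of_eventuallyEq_mul_rpow {α : Type*} {l : Filter α} [l.NeBot] {a b t : α → ℝ}
    {A B d : ℝ} (ha : Tendsto a l (𝓝 A)) (hb : Tendsto b l (𝓝 B)) (ht : Tendsto t l (𝓝[>] 0))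
    (hab : ∀ᶠ i in l, a i = b i * t i ^ d) :
    (0 < d → A = 0) ∧ (d < 0 → B = 0) ∧ (d = 0 → A = B) := by
  refine ⟨fun hd => ?_, fun hd => ?_, fun hd => ?_⟩
  · refine tendsto_nhds_unique ha ?_
    simpa using (hb.mul (tendsto_rpow_of_tendsto_nhdsGT_zero ht hd)).congr'
      (hab.mono fun _ h => h.symm)
  · have hba : ∀ᶠ i in l, b i = a i * t i ^ (-d) := by
      filter_upwards [hab, ht self_mem_nhdsWithin] with i h (hti : 0 < t i)
      rw [h, mul_assoc, ← Real.rpow_add hti, add_neg_cancel, Real.rpow_zero, mul_one]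
    refine tendsto_nhds_unique hb ?_
    simpa using (ha.mul (tendsto_rpow_of_tendsto_nhdsGT_zero ht (neg_pos.2 hd))).congr'
      (hba.mono fun _ h => h.symm)
  · subst hd
    exact tendsto_nhds_unique ha (hb.congr' (hab.mono fun _ h => by simp [h]))

theorem exists_ultrafilter_tendsto_of_eventually_abs_le {α : Type*} {F : Filter α} [F.NeBot]
    {c : α → ℝ} {M : ℝ} (hc : ∀ᶠ i in F, |c i| ≤ M) :
    ∃ (U : Ultrafilter α) (c₀ : ℝ), ↑U ≤ F ∧ Tendsto c U (𝓝 c₀) := by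
  obtain ⟨c₀, -, hc₀⟩ := (isCompact_Icc (a := -M) (b := M)).exists_mapClusterPt (f := F) (u := c)
    (le_principal_iff.2 (hc.mono fun _ hi => abs_le.1 hi))
  obtain ⟨U, hU, hUc⟩ := mapClusterPt_iff_ultrafilter.1 hc₀
  exact ⟨U, c₀, hU, hUc⟩

theorem eq_and_eq_taylor_of_forall_eval {P Q : ℝ[X]} (hP : P ≠ 0) (hQ : Q ≠ 0) {d c₀ : ℝ}
    (h : ∀ z, (0 < d → P.eval z = 0) ∧ (d < 0 → Q.eval (z + c₀) = 0) ∧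
      (d = 0 → P.eval z = Q.eval (z + c₀))) :
    d = 0 ∧ P = taylor c₀ Q := by
  rcases lt_trichotomy d 0 with hd | hd | hd
  · exact absurd (Polynomial.funext fun u => by simpa using (h (u - c₀)).2.1 hd) hQ
  · exact ⟨hd, Polynomial.funext fun z => by simpa [taylor_eval] using (h z).2.2 hd⟩
  · exact absurd (Polynomial.funext fun z => by simpa using (h z).1 hd) hP

theorem AnalyticAt.natCast_le_analyticOrderAt_of_isBigO {μ : ℝ → ℝ} (hμ : AnalyticAt ℝ μ 0)
    {n : ℕ} (hO : μ =O[𝓝[>] 0] fun s => s ^ n) : (n : ℕ∞) ≤ analyticOrderAt μ 0 := by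
  by_contra! hlt
  obtain ⟨k, hk⟩ := ENat.ne_top_iff_exists.1 hlt.ne_top
  have hkn : k < n := by rw [← hk] at hlt; exact_mod_cast hlt
  obtain ⟨g, hg, hg0, hμg⟩ := hμ.analyticOrderAt_eq_natCast.1 hk.symm
  have hgO : g =O[𝓝[>] 0] fun s => s ^ (n - k) := by
    refine (hO.mul (isBigO_refl (fun s : ℝ => (s ^ k)⁻¹) _)).congr' ?_ ?_
    · filter_upwards [nhdsWithin_le_nhds hμg, self_mem_nhdsWithin] with s hs (hs0 : 0 < s)
      rw [hs, sub_zero, smul_eq_mul, mul_comm, inv_mul_cancel_left₀ (pow_pos hs0 k).ne']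
    · filter_upwards [self_mem_nhdsWithin] with s (hs0 : 0 < s)
      rw [pow_sub₀ _ hs0.ne' hkn.le]
  have hg_zero : Tendsto g (𝓝[>] 0) (𝓝 0) := hgO.trans_tendsto <| by
    simpa [zero_pow (Nat.sub_ne_zero_of_lt hkn)] using
      ((continuous_pow (n - k)).tendsto (0 : ℝ)).mono_left nhdsWithin_le_nhds
  exact hg0 (tendsto_nhds_unique (hg.continuousAt.tendsto.mono_left nhdsWithin_le_nhds) hg_zero)

theorem AllowableBranch.exists_eventuallyEq_mul {lam : ℝ → ℝ} (hlam : AllowableBranch lam) :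
    ∃ (b : ℝ) (h : ℝ → ℝ), 0 < b ∧ AnalyticAt ℝ h 0 ∧ ∀ᶠ y in 𝓝[≥] 0, lam y = y * h (y ^ b) := by
  obtain ⟨N, μ, hN, hμ, -, hlamμ, C, -, hC⟩ := hlam
  have hpow : Tendsto (fun s : ℝ => s ^ N) (𝓝[>] 0) (𝓝[≥] 0) := by
    refine tendsto_nhdsWithin_iff.2 ⟨?_, ?_⟩
    · simpa [zero_pow hN.ne'] using ((continuous_pow N).tendsto (0 : ℝ)).mono_left
        nhdsWithin_le_nhds
    · filter_upwards [self_mem_nhdsWithin] with s (hs : 0 < s) using pow_nonneg hs.le N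
  have hO : μ =O[𝓝[>] 0] fun s => s ^ N := by
    refine IsBigO.of_bound C ?_
    filter_upwards [hpow.eventually hlamμ, hpow.eventually hC, self_mem_nhdsWithin]
      with s h1 h2 (hs : 0 < s)
    rw [Real.pow_rpow_inv_natCast hs.le hN.ne'] at h1
    rw [← h1, Real.norm_eq_abs, Real.norm_eq_abs, abs_of_nonneg (pow_nonneg hs.le N)]
    exact h2
  obtain ⟨h, hh, hμh⟩ := (natCast_le_analyticOrderAt hμ).1
    (hμ.natCast_le_analyticOrderAt_of_isBigO hO)
  have hroot : Tendsto (fun y : ℝ => y ^ (N : ℝ)⁻¹) (𝓝[≥] 0) (𝓝 0) := by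
    simpa [Real.zero_rpow (inv_ne_zero (Nat.cast_ne_zero.2 hN.ne'))] using
      ((Real.continuousAt_rpow_const 0 _
        (Or.inr (inv_nonneg.2 (Nat.cast_nonneg N)))).tendsto).mono_left nhdsWithin_le_nhds
  refine ⟨(N : ℝ)⁻¹, h, by positivity, hh, ?_⟩
  filter_upwards [hlamμ, hroot.eventually hμh, self_mem_nhdsWithin] with y h1 h2 hy
  rw [h1, h2, sub_zero, smul_eq_mul, Real.rpow_inv_natCast_pow hy hN.ne']

theorem isBigO_comp_sub_comp_of_tendsto_deriv {F D : ℝ → ℝ} {D₀ : ℝ}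
    (hF : ∀ᶠ y in 𝓝[>] 0, HasDerivAt F (D y) y) (hD : Tendsto D (𝓝[>] 0) (𝓝 D₀))
    {α : Type*} {l : Filter α} {t t₀ : α → ℝ} (ht : Tendsto t l (𝓝[>] 0))
    (ht₀ : Tendsto t₀ l (𝓝[>] 0)) :
    (fun i => F (t i) - F (t₀ i)) =O[l] fun i => t i - t₀ i := by
  have hbound : ∀ᶠ y in 𝓝[>] 0, HasDerivAt F (D y) y ∧ ‖D y‖ ≤ ‖D₀‖ + 1 :=
    hF.and (hD.norm.eventually (eventually_le_nhds (lt_add_one _)))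
  obtain ⟨δ, hδ, hsub⟩ := mem_nhdsGT_iff_exists_Ioo_subset.1 hbound
  refine IsBigO.of_bound (‖D₀‖ + 1) ?_
  filter_upwards [ht (Ioo_mem_nhdsGT hδ), ht₀ (Ioo_mem_nhdsGT hδ)] with i hi hi₀
  exact (convex_Ioo 0 δ).norm_image_sub_le_of_norm_hasDerivWithin_le
    (fun y hy => (hsub hy).1.hasDerivWithinAt) (fun y hy => (hsub hy).2) hi₀ hi

theorem isBigO_mul_comp_rpow_sub {h : ℝ → ℝ} (hh : AnalyticAt ℝ h 0) {b : ℝ} (hb : 0 < b)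
    {α : Type*} {l : Filter α} {t t₀ : α → ℝ} (ht : Tendsto t l (𝓝[>] 0))
    (ht₀ : Tendsto t₀ l (𝓝[>] 0)) :
    (fun i => t i * h (t i ^ b) - t₀ i * h (t₀ i ^ b)) =O[l] fun i => t i - t₀ i := by
  have hroot : Tendsto (fun y : ℝ => y ^ b) (𝓝[>] 0) (𝓝 0) :=
    tendsto_rpow_of_tendsto_nhdsGT_zero tendsto_id hb
  refine isBigO_comp_sub_comp_of_tendsto_deriv (F := fun y => y * h (y ^ b))
    (D := fun y => h (y ^ b) + b * y ^ b * deriv h (y ^ b)) (D₀ := h 0) ?_ ?_ ht ht₀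
  · filter_upwards [hroot.eventually hh.eventually_analyticAt, self_mem_nhdsWithin]
      with y hy (hy0 : 0 < y)
    refine ((hasDerivAt_id' y).mul (hy.differentiableAt.hasDerivAt.comp y
      (Real.hasDerivAt_rpow_const (Or.inl hy0.ne')))).congr_deriv ?_
    rw [Real.rpow_sub_one hy0.ne']
    field_simp
    rfl
  · simpa using (hh.continuousAt.tendsto.comp hroot).add
      ((tendsto_const_nhds.mul hroot).mul (hh.deriv.continuousAt.tendsto.comp hroot))

theorem AllowableBranch.isBigO_comp_sub_comp {lam : ℝ → ℝ} (hlam : AllowableBranch lam)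
    {α : Type*} {l : Filter α} {t t₀ : α → ℝ} (ht : Tendsto t l (𝓝[>] 0))
    (ht₀ : Tendsto t₀ l (𝓝[>] 0)) :
    (fun i => lam (t i) - lam (t₀ i)) =O[l] fun i => t i - t₀ i := by
  obtain ⟨b, h, hb, hh, hlamh⟩ := hlam.exists_eventuallyEq_mul
  have hle : 𝓝[>] (0 : ℝ) ≤ 𝓝[≥] 0 := nhdsWithin_mono _ Set.Ioi_subset_Ici_self
  refine (isBigO_mul_comp_rpow_sub hh hb ht ht₀).congr' ?_ EventuallyEq.rfl
  filter_upwards [(ht.mono_right hle).eventually hlamh, (ht₀.mono_right hle).eventually hlamh]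
    with i h1 h2
  rw [h1, h2]

theorem AllowableBranch.isBigO {lam : ℝ → ℝ} (hlam : AllowableBranch lam) :
    lam =O[𝓝[>] 0] fun y => y := by
  obtain ⟨-, -, -, -, -, -, C, -, hC⟩ := hlam
  refine IsBigO.of_bound C ?_
  filter_upwards [nhdsWithin_mono _ Set.Ioi_subset_Ici_self hC, self_mem_nhdsWithin]
    with y hy (hy0 : 0 < y)
  rwa [Real.norm_eq_abs, Real.norm_eq_abs, abs_of_pos hy0]

def branchPoint (lam : ℝ → ℝ) (ξ z y : ℝ) : ℝ × ℝ := (lam y + z * y ^ ξ, y)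

def hornOffset (lam : ℝ → ℝ) (q : ℝ × ℝ) : ℝ := q.1 - lam q.2

def hornCoord (lam : ℝ → ℝ) (ξ : ℝ) (q : ℝ × ℝ) : ℝ := hornOffset lam q / q.2 ^ ξ

theorem branchPoint_hornCoord {lam : ℝ → ℝ} {ξ : ℝ} {q : ℝ × ℝ} (hq : 0 < q.2) :
    branchPoint lam ξ (hornCoord lam ξ q) q.2 = q := by
  have : q.2 ^ ξ ≠ 0 := (Real.rpow_pos_of_pos hq ξ).ne'
  ext
  · simp [branchPoint, hornCoord, hornOffset, div_mul_cancel₀ _ this]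
  · rfl

theorem abs_hornCoord_le_of_mem_horn {lam : ℝ → ℝ} {ξ ξ₀ N : ℝ} {q : ℝ × ℝ}
    (hq : q ∈ Horn ξ₀ lam N) : |hornCoord lam ξ q| ≤ N * q.2 ^ (ξ₀ - ξ) := by
  obtain ⟨hq0, hqN⟩ := hq
  have hpos := Real.rpow_pos_of_pos hq0 ξ
  rw [hornCoord, hornOffset, abs_div, abs_of_pos hpos, div_le_iff₀ hpos, mul_assoc,
    ← Real.rpow_add hq0, sub_add_cancel]
  exact hqN

theorem AdmitsExpansion.tendsto {f : ℝ × ℝ → ℝ} {lam : ℝ → ℝ} {ξ e : ℝ} {P : ℝ[X]}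
    (hf : AdmitsExpansion f lam ξ e P) {α : Type*} {l : Filter α} {t w : α → ℝ} {w₀ : ℝ}
    (ht : Tendsto t l (𝓝[>] 0)) (hw : Tendsto w l (𝓝 w₀)) :
    Tendsto (fun i => f (branchPoint lam ξ (w i) (t i)) / t i ^ e) l (𝓝 (P.eval w₀)) := by
  suffices h : Tendsto (fun i => f (branchPoint lam ξ (w i) (t i)) / t i ^ e - P.eval (w i)) l
      (𝓝 0) by
    simpa using h.add ((P.continuous.tendsto w₀).comp hw)
  rw [Metric.tendsto_nhds]
  intro ε hε
  have hwR : ∀ᶠ i in l, |w i| ≤ |w₀| + 1 := by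
    filter_upwards [Metric.tendsto_nhds.1 hw 1 one_pos] with i hi
    have := abs_sub_abs_le_abs_sub (w i) w₀
    rw [Real.dist_eq] at hi
    linarith
  filter_upwards [ht (hf (|w₀| + 1) (by positivity) (ε / 2) (half_pos hε)), hwR,
    ht self_mem_nhdsWithin] with i hi hwi (hti : 0 < t i)
  have hpos := Real.rpow_pos_of_pos hti e
  rw [Real.dist_eq, sub_zero, ← mul_div_cancel_right₀ (P.eval (w i)) hpos.ne', ← sub_div,
    abs_div, abs_of_pos hpos, div_lt_iff₀ hpos]
  exact (hi (w i) hwi).trans_lt (by nlinarith)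

section ImageOfBranchPoint

variable {σ : ℝ × ℝ → ℝ × ℝ} {lam lam' : ℝ → ℝ} {ξ : ℝ}

theorem isBigO_branchPoint (hlam : lam =O[𝓝[>] 0] fun y => y) (hξ : 1 ≤ ξ) (z : ℝ) :
    branchPoint lam ξ z =O[𝓝[>] 0] fun y => y := by
  have hpow : (fun y : ℝ => y ^ ξ) =O[𝓝[>] 0] fun y => y := by
    refine IsBigO.of_bound 1 ?_
    filter_upwards [Ioo_mem_nhdsGT one_pos] with y hy
    rw [one_mul, Real.norm_eq_abs, Real.norm_eq_abs, abs_of_pos hy.1,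
      abs_of_pos (Real.rpow_pos_of_pos hy.1 ξ)]
    simpa using Real.rpow_le_rpow_of_exponent_ge hy.1 hy.2.le hξ
  exact (hlam.add (hpow.const_mul_left z)).prod_left (isBigO_refl _ _)

theorem tendsto_branchPoint (hlam : lam =O[𝓝[>] 0] fun y => y) (hξ : 1 ≤ ξ) (z : ℝ) :
    Tendsto (branchPoint lam ξ z) (𝓝[>] 0) (𝓝 0) :=
  (isBigO_branchPoint hlam hξ z).trans_tendsto (tendsto_id.mono_left nhdsWithin_le_nhds)

theorem tendsto_snd_image_branchPoint_div
    (hσ : HasStrictFDerivAt σ (ContinuousLinearMap.id ℝ (ℝ × ℝ)) 0) (hσ0 : σ 0 = 0)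
    (hlam : lam =O[𝓝[>] 0] fun y => y) (hξ : 1 ≤ ξ) (z : ℝ) :
    Tendsto (fun y => (σ (branchPoint lam ξ z y)).2 / y) (𝓝[>] 0) (𝓝 1) := by
  have h := isLittleO_image_sub_image hσ (tendsto_branchPoint hlam hξ z) tendsto_const_nhds
  simp only [hσ0, sub_zero] at h
  have h2 : (fun y => (σ (branchPoint lam ξ z y)).2 - y) =o[𝓝[>] 0] fun y => y :=
    (isBigO_snd_prod' (f' := fun y => σ (branchPoint lam ξ z y) - branchPoint lam ξ z y)
      |>.trans_isLittleO h |>.trans_isBigO (isBigO_branchPoint hlam hξ z))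
  have h3 := h2.tendsto_div_nhds_zero.add_const 1
  rw [zero_add] at h3
  refine h3.congr' ?_
  filter_upwards [self_mem_nhdsWithin] with y (hy : 0 < y)
  rw [sub_div, div_self hy.ne', sub_add_cancel]

theorem tendsto_snd_image_branchPoint
    (hσ : HasStrictFDerivAt σ (ContinuousLinearMap.id ℝ (ℝ × ℝ)) 0) (hσ0 : σ 0 = 0)
    (hlam : lam =O[𝓝[>] 0] fun y => y) (hξ : 1 ≤ ξ) (z : ℝ) :
    Tendsto (fun y => (σ (branchPoint lam ξ z y)).2) (𝓝[>] 0) (𝓝[>] 0) := by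
  have h := tendsto_snd_image_branchPoint_div hσ hσ0 hlam hξ z
  refine tendsto_nhdsWithin_iff.2 ⟨?_, ?_⟩
  · simpa using (h.mul (tendsto_id.mono_left (nhdsWithin_le_nhds (a := (0 : ℝ))))).congr'
      (by filter_upwards [self_mem_nhdsWithin] with y hy using div_mul_cancel₀ _ (ne_of_gt hy))
  · filter_upwards [h (Ioi_mem_nhds one_pos), self_mem_nhdsWithin]
      with y (h1 : 0 < (σ (branchPoint lam ξ z y)).2 / y) (hy : 0 < y)
    exact (div_pos_iff_of_pos_right hy).1 h1

theorem tendsto_hornOffset_image_branchPoint_sub_div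
    (hσ : HasStrictFDerivAt σ (ContinuousLinearMap.id ℝ (ℝ × ℝ)) 0) (hσ0 : σ 0 = 0)
    (hlam : lam =O[𝓝[>] 0] fun y => y) (hlam' : AllowableBranch lam') (hξ : 1 ≤ ξ) (z : ℝ) :
    Tendsto (fun y => (hornOffset lam' (σ (branchPoint lam ξ z y)) -
      hornOffset lam' (σ (branchPoint lam ξ 0 y))) / y ^ ξ) (𝓝[>] 0) (𝓝 z) := by
  set p := branchPoint lam ξ z
  set p₀ := branchPoint lam ξ 0
  have hD : (fun y => σ (p y) - σ (p₀ y) - (p y - p₀ y)) =o[𝓝[>] 0] fun y => y ^ ξ := by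
    refine (isLittleO_image_sub_image hσ (tendsto_branchPoint hlam hξ z)
      (tendsto_branchPoint hlam hξ 0)).trans_isBigO ?_
    have : (fun y => p y - p₀ y) = fun y => (z * y ^ ξ, (0 : ℝ)) := by
      ext y <;> simp [p, p₀, branchPoint]
    rw [this]
    exact ((isBigO_refl _ _).const_mul_left z).prod_left (isBigO_zero _ _)
  have hlip : (fun y => lam' (σ (p y)).2 - lam' (σ (p₀ y)).2) =o[𝓝[>] 0] fun y => y ^ ξ :=
    (hlam'.isBigO_comp_sub_comp (tendsto_snd_image_branchPoint hσ hσ0 hlam hξ z)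
      (tendsto_snd_image_branchPoint hσ hσ0 hlam hξ 0)).trans_isLittleO
      ((isBigO_snd_prod'.trans_isLittleO hD).congr_left fun y => by simp [p, p₀, branchPoint])
  have h := ((isBigO_fst_prod'.trans_isLittleO hD).sub hlip).tendsto_div_nhds_zero.add_const z
  rw [zero_add] at h
  refine h.congr' ?_
  filter_upwards [self_mem_nhdsWithin] with y (hy : 0 < y)
  have hy : y ^ ξ ≠ 0 := (Real.rpow_pos_of_pos hy ξ).ne'
  simp only [p, p₀, hornOffset, branchPoint, Prod.fst_sub, zero_mul, add_zero]
  field_simp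
  ring

theorem tendsto_hornCoord_image_branchPoint
    (hσ : HasStrictFDerivAt σ (ContinuousLinearMap.id ℝ (ℝ × ℝ)) 0) (hσ0 : σ 0 = 0)
    (hlam : lam =O[𝓝[>] 0] fun y => y) (hlam' : AllowableBranch lam') (hξ : 1 ≤ ξ) (z : ℝ)
    {l : Filter ℝ} (hl : l ≤ 𝓝[>] 0) {c₀ : ℝ}
    (hc : Tendsto (fun y => hornCoord lam' ξ (σ (branchPoint lam ξ 0 y))) l (𝓝 c₀)) :
    Tendsto (fun y => hornCoord lam' ξ (σ (branchPoint lam ξ z y))) l (𝓝 (z + c₀)) := by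
  have hratio : ∀ z', Tendsto (fun y => ((σ (branchPoint lam ξ z' y)).2 / y) ^ ξ) l (𝓝 1) :=
    fun z' => by
      simpa using ((tendsto_snd_image_branchPoint_div hσ hσ0 hlam hξ z').mono_left hl).rpow_const
        (Or.inl one_ne_zero)
  -- the horn coordinate of `σ p_z` is `(offset difference / y^ξ + c(y) (t₀/y)^ξ) / (t/y)^ξ`,
  -- where `t` and `t₀` are the heights of `σ p_z` and `σ p₀`
  have h := (((tendsto_hornOffset_image_branchPoint_sub_div hσ hσ0 hlam hlam' hξ z).mono_left
    hl).add (hc.mul (hratio 0))).div (hratio z) one_ne_zero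
  rw [mul_one, div_one] at h
  refine h.congr' ?_
  have hpos := fun z' => (tendsto_snd_image_branchPoint hσ hσ0 hlam hξ z').mono_left hl
    self_mem_nhdsWithin
  filter_upwards [hl self_mem_nhdsWithin, hpos z, hpos 0]
    with y (hy : 0 < y) (ht : 0 < (σ (branchPoint lam ξ z y)).2)
      (ht₀ : 0 < (σ (branchPoint lam ξ 0 y)).2)
  have := Real.rpow_pos_of_pos hy ξ
  have := Real.rpow_pos_of_pos ht ξ
  have := Real.rpow_pos_of_pos ht₀ ξ
  simp only [hornCoord, Pi.div_apply]
  rw [Real.div_rpow ht.le hy.le, Real.div_rpow ht₀.le hy.le]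
  field_simp
  ring

theorem eq_taylor_of_tendsto_hornCoord {f g : ℝ × ℝ → ℝ} {e e' : ℝ} {P Q : ℝ[X]}
    (hσ : HasStrictFDerivAt σ (ContinuousLinearMap.id ℝ (ℝ × ℝ)) 0) (hσ0 : σ 0 = 0)
    (hfg : ∀ᶠ p in 𝓝 (0 : ℝ × ℝ), f p = g (σ p))
    (hlam : lam =O[𝓝[>] 0] fun y => y) (hlam' : AllowableBranch lam') (hξ : 1 ≤ ξ)
    (hP : P ≠ 0) (hQ : Q ≠ 0)
    (hPexp : AdmitsExpansion f lam ξ e P) (hQexp : AdmitsExpansion g lam' ξ e' Q)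
    {l : Filter ℝ} [l.NeBot] (hl : l ≤ 𝓝[>] 0) {c₀ : ℝ}
    (hc : Tendsto (fun y => hornCoord lam' ξ (σ (branchPoint lam ξ 0 y))) l (𝓝 c₀)) :
    e = e' ∧ P = taylor c₀ Q := by
  have hl' : Tendsto (fun y => y) l (𝓝[>] 0) := hl
  refine (eq_and_eq_taylor_of_forall_eval hP hQ fun z => ?_).imp
    (fun h => (sub_eq_zero.1 h).symm) id
  have ht := (tendsto_snd_image_branchPoint hσ hσ0 hlam hξ z).mono_left hl
  have hG := (hQexp.tendsto ht
    (tendsto_hornCoord_image_branchPoint hσ hσ0 hlam hlam' hξ z hl hc)).mul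
    (((tendsto_snd_image_branchPoint_div hσ hσ0 hlam hξ z).mono_left hl).rpow_const (p := e')
      (Or.inl one_ne_zero))
  rw [Real.one_rpow, mul_one] at hG
  refine limits_of_eventuallyEq_mul_rpow (hPexp.tendsto hl' tendsto_const_nhds) hG hl' ?_
  filter_upwards [hl ((tendsto_branchPoint hlam hξ z).eventually hfg), hl self_mem_nhdsWithin,
    ht self_mem_nhdsWithin] with y hfgy (hy : 0 < y) (hty : 0 < (σ (branchPoint lam ξ z y)).2)
  rw [branchPoint_hornCoord hty, hfgy, Real.div_rpow hty.le hy.le, Real.rpow_sub hy]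
  have := Real.rpow_pos_of_pos hy e
  have := Real.rpow_pos_of_pos hty e'
  field_simp

end ImageOfBranchPoint

theorem stmt8_general (σ : ℝ × ℝ → ℝ × ℝ) (hσ : IsC1DiffeoGerm σ)
    (hDσ : fderiv ℝ σ 0 = ContinuousLinearMap.id ℝ (ℝ × ℝ))
    (f g : ℝ × ℝ → ℝ)
    (hfg : ∀ᶠ p in 𝓝 (0 : ℝ × ℝ), f p = g (σ p))
    (lam lam' : ℝ → ℝ) (hγ : AllowableBranch lam) (hγ' : AllowableBranch lam')
    (ξ₀ N : ℝ) (hN : 0 < N)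
    (hincl : ∀ᶠ y in 𝓝[>] (0 : ℝ), σ (lam y, y) ∈ Horn ξ₀ lam' N)
    (ξ : ℝ) (hξ1 : 1 ≤ ξ) (hξ2 : ξ ≤ ξ₀)
    (e e' : ℝ) (P Q : Polynomial ℝ) (hP : P ≠ 0) (hQ : Q ≠ 0)
    (hPexp : AdmitsExpansion f lam ξ e P) (hQexp : AdmitsExpansion g lam' ξ e' Q) :
    e = e' ∧ (ξ < ξ₀ → P = Q) ∧
      (ξ = ξ₀ → P.degree = Q.degree ∧ P.leadingCoeff = Q.leadingCoeff) := by
  have hσ' : HasStrictFDerivAt σ (ContinuousLinearMap.id ℝ (ℝ × ℝ)) 0 :=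
    hDσ ▸ hσ.hasStrictFDerivAt
  set c := fun y => hornCoord lam' ξ (σ (branchPoint lam ξ 0 y))
  have key : ∀ (l : Filter ℝ) [l.NeBot], l ≤ 𝓝[>] 0 → ∀ {c₀}, Tendsto c l (𝓝 c₀) →
      e = e' ∧ P = taylor c₀ Q := fun _ _ hl _ hc =>
    eq_taylor_of_tendsto_hornCoord hσ' hσ.1 hfg hγ.isBigO hγ' hξ1 hP hQ hPexp hQexp hl hc
  have ht₀ := tendsto_snd_image_branchPoint hσ' hσ.1 hγ.isBigO hξ1 0
  have hc : ∀ᶠ y in 𝓝[>] 0, ‖c y‖ ≤ N * (σ (branchPoint lam ξ 0 y)).2 ^ (ξ₀ - ξ) := by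
    filter_upwards [hincl] with y hy
    exact abs_hornCoord_le_of_mem_horn (by simpa [branchPoint] using hy)
  have hcN : ∀ᶠ y in 𝓝[>] 0, |c y| ≤ N := by
    filter_upwards [hc, ht₀ (Ioo_mem_nhdsGT one_pos)] with y hy hty
    exact hy.trans (mul_le_of_le_one_right hN.le
      (Real.rpow_le_one hty.1.le hty.2.le (sub_nonneg.2 hξ2)))
  obtain ⟨U, c₀, hU, hUc⟩ := exists_ultrafilter_tendsto_of_eventually_abs_le hcN
  obtain ⟨he, hPQ⟩ := key U hU hUc
  refine ⟨he, fun hlt => ?_, fun _ => ?_⟩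
  · have hc0 : Tendsto c (𝓝[>] 0) (𝓝 0) := squeeze_zero_norm' hc <| by
      simpa using (tendsto_rpow_of_tendsto_nhdsGT_zero ht₀ (sub_pos.2 hlt)).const_mul N
    simpa using (key _ le_rfl hc0).2
  · rw [hPQ, degree_taylor, leadingCoeff_taylor]
    exact ⟨rfl, rfl⟩

/-- C¹ invariance (with `Dσ(0) = Id`) of the coefficient polynomials under a horn inclusion:
for `ξ < ξ₀` the polynomials coincide; for `ξ = ξ₀` their degrees and leading coefficients
coincide. -/
theorem stmt8 (σ : ℝ × ℝ → ℝ × ℝ) (hσ : IsC1DiffeoGerm σ)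
    (hDσ : fderiv ℝ σ 0 = ContinuousLinearMap.id ℝ (ℝ × ℝ))
    (f g : ℝ × ℝ → ℝ) (hfa : AnalyticAt ℝ f 0) (hga : AnalyticAt ℝ g 0)
    (hf0 : f 0 = 0) (hg0 : g 0 = 0)
    (hfm : MiniRegularInX f) (hgm : MiniRegularInX g)
    (hfg : ∀ᶠ p in 𝓝 (0 : ℝ × ℝ), f p = g (σ p))
    (lam lam' : ℝ → ℝ) (hγ : AllowableBranch lam) (hγ' : AllowableBranch lam')
    (ξ₀ N : ℝ) (hξ₀ : 1 ≤ ξ₀) (hN : 0 < N)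
    (hincl : ∀ᶠ y in 𝓝[>] (0 : ℝ), σ (lam y, y) ∈ Horn ξ₀ lam' N)
    (ξ : ℝ) (hξ1 : 1 ≤ ξ) (hξ2 : ξ ≤ ξ₀)
    (e e' : ℝ) (P Q : Polynomial ℝ) (hP : P ≠ 0) (hQ : Q ≠ 0)
    (hPexp : AdmitsExpansion f lam ξ e P) (hQexp : AdmitsExpansion g lam' ξ e' Q) :
    e = e' ∧ (ξ < ξ₀ → P = Q) ∧
      (ξ = ξ₀ → P.degree = Q.degree ∧ P.leadingCoeff = Q.leadingCoeff) :=
  stmt8_general σ hσ hDσ f g hfg lam lam' hγ hγ' ξ₀ N hN hincl ξ hξ1 hξ2 e e' P Q hP hQ hPexp hQexp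
end
end

section
/- For t > 0 define P_t(z) = z³ + 3√t·z² + 2(1 − t√t). Let t, t′ ∈ (0, ∞) and suppose there exist real numbers α ≠ 0 and β ≠ 0 such that P_{t′}(z) = β⁶ · P_t( (α/β³)·z ) for all z ∈ ℝ. Then α² = β² = 1 and t = t′. -/
/-!
Comparing coefficients in `P_{t'}(z) = β⁶ P_t((α/β³) z)` gives `α³ = β³` (from `z³`), hence
`α = β`; then `√t' = α²√t` (from `z²`) and `1 - t'√t' = α⁶ (1 - t√t)` (constant term).
Since `t'√t' = (√t')³ = α⁶ t√t`, the constant terms force `α⁶ = 1`, so `α² = 1` and `√t' = √t`.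
-/

theorem coeffs_eq_zero_of_forall_cube_add_sq_add_const {K : Type*} [Field K] [NeZero (2 : K)]
    {a b c : K} (h : ∀ z : K, a * z ^ 3 + b * z ^ 2 + c = 0) : a = 0 ∧ b = 0 ∧ c = 0 := by
  have h0 := h 0
  have h1 := h 1
  have hm := h (-1)
  have two_ne : (2 : K) ≠ 0 := two_ne_zero
  refine ⟨?_, ?_, by simpa using h0⟩
  · exact (mul_eq_zero.mp (by linear_combination h1 - hm : 2 * a = 0)).resolve_left two_ne
  · exact (mul_eq_zero.mp (by linear_combination h1 + hm - 2 * h0 : 2 * b = 0)).resolve_left two_ne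

theorem eq_one_of_one_sub_mul_cube {u s : ℝ} (hu : 0 ≤ u)
    (h : 1 - (u * s) ^ 3 = u ^ 3 * (1 - s ^ 3)) : u = 1 :=
  (pow_eq_one_iff_of_nonneg hu three_ne_zero).mp (by linear_combination -h)

theorem Real.mul_sqrt_self_eq_sqrt_pow_three {t : ℝ} (ht : 0 ≤ t) : t * √t = √t ^ 3 := by
  rw [pow_succ, Real.sq_sqrt ht]

theorem stmt12_general (t t' : ℝ) (ht : 0 < t) (ht' : 0 < t') (α β : ℝ) (hβ : β ≠ 0)
    (h : ∀ z : ℝ,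
      z ^ 3 + 3 * Real.sqrt t' * z ^ 2 + 2 * (1 - t' * Real.sqrt t') =
        β ^ 6 * ((α / β ^ 3 * z) ^ 3 + 3 * Real.sqrt t * (α / β ^ 3 * z) ^ 2 +
          2 * (1 - t * Real.sqrt t))) :
    α ^ 2 = 1 ∧ β ^ 2 = 1 ∧ t = t' := by
  obtain ⟨hcube, hsq, hconst⟩ := coeffs_eq_zero_of_forall_cube_add_sq_add_const
    (a := 1 - β ^ 6 * (α / β ^ 3) ^ 3) (b := 3 * √t' - 3 * β ^ 6 * (α / β ^ 3) ^ 2 * √t)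
    (c := 2 * (1 - t' * √t') - 2 * β ^ 6 * (1 - t * √t)) fun z => by linear_combination h z
  have hαβ : α = β := by
    refine (Odd.pow_inj (n := 3) (by decide)).mp ?_
    field_simp at hcube
    linear_combination -hcube
  subst hαβ
  have hsqrt : √t' = α ^ 2 * √t := by
    field_simp at hsq
    linear_combination hsq / 3
  rw [Real.mul_sqrt_self_eq_sqrt_pow_three ht.le, Real.mul_sqrt_self_eq_sqrt_pow_three ht'.le,
    hsqrt] at hconst
  have hα2 : α ^ 2 = 1 :=
    eq_one_of_one_sub_mul_cube (sq_nonneg α) (by linear_combination hconst / 2)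
  refine ⟨hα2, hα2, (Real.sqrt_inj ht.le ht'.le).mp ?_⟩
  rw [hsqrt, hα2, one_mul]

/-- Rigidity of the coefficient polynomials `P_t(z) = z³ + 3√t·z² + 2(1 − t√t)` of the family
`A_t` under the scaling ambiguity `P_{t′}(z) = β⁶·P_t((α/β³)·z)`. -/
theorem stmt12 (t t' : ℝ) (ht : 0 < t) (ht' : 0 < t') (α β : ℝ) (hα : α ≠ 0) (hβ : β ≠ 0)
    (h : ∀ z : ℝ,
      z ^ 3 + 3 * Real.sqrt t' * z ^ 2 + 2 * (1 - t' * Real.sqrt t') =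
        β ^ 6 * ((α / β ^ 3 * z) ^ 3 + 3 * Real.sqrt t * (α / β ^ 3 * z) ^ 2 +
          2 * (1 - t * Real.sqrt t))) :
    α ^ 2 = 1 ∧ β ^ 2 = 1 ∧ t = t' :=
  stmt12_general t t' ht ht' α β hβ h
end

section
/- Let q ≥ 2 be an integer, and let f, g ∈ ℝ[x,y] be nonzero polynomials that are weighted homogeneous with respect to the weights (q, 1) (every monomial x^i y^j of f satisfies q·i + j = d_f for some fixed d_f, and similarly for g). Assume that neither f nor g can be written in the form A·(x + b·y^q)^k · y^l with A, b ∈ ℝ and k, l ∈ ℕ. If there exists a C¹ diffeomorphism germ σ : (ℝ²,0) → (ℝ²,0) with f = g ∘ σ on a neighbourhood of the origin, then there exist real numbers c₁ ≠ 0, c₂ ≠ 0 and b ∈ ℝ such that f(x, y) = g(c₁·x − b·y^q, c₂·y) for all (x, y) ∈ ℝ². -/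
/-!
Put `P_f(s) = f(s, 1)`, so that weighted homogeneity reads `f(c t^q, t) = t^{d_f} P_f(c)`, and
push the arcs `t ↦ (c t^q, t)` forward by `σ`. Write `(α, γ)` and `(β, δ)` for the columns of
`L = dσ(0)`. The image arcs are `t (β, δ) + o(t)`, and strict differentiability says two of them
differ by `(c - c') t^q (α, γ) + o(t^q)`. So a coordinate of the image arc divided by `t^q` has
increments in `c` that become exactly linear in the limit. Along an ultrafilter, that coordinate
either escapes to infinity, and then the leading term of `g` makes `P_f` constant, or it converges,
and then comparing powers of `t` expresses `P_f` through `P_g` evaluated on an affine function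
of `c`. If `β ≠ 0`, this makes `P_f` a constant or a power of a linear form, so `f` would be
monomial-like. Hence `β = 0`, and then `d_f = d_g` and `P_f(c) = δ^{d_g} P_g(δ^{-q} (α c + μ))`,
which rehomogenises to `f(x, y) = g(α x + μ y^q, δ y)`.
-/

open Filter Topology

noncomputable section

open Polynomial Asymptotics Bornology

namespace MvPolynomial

theorem IsWeightedHomogeneous.eval_pow_mul {σ R : Type*} [Fintype σ] [CommSemiring R]
    {w : σ → ℕ} {p : MvPolynomial σ R} {e : ℕ} (hp : p.IsWeightedHomogeneous w e)
    (t : R) (x : σ → R) : eval (fun i => t ^ w i * x i) p = t ^ e * eval x p := by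
  simp only [eval_eq', Finset.mul_sum]
  refine Finset.sum_congr rfl fun v hv => ?_
  have hw : ∑ i, w i * v i = e := by
    rw [← hp (mem_support_iff.mp hv), Finsupp.weight_apply, Finsupp.sum_fintype _ _ (by simp)]
    simp [smul_eq_mul, mul_comm]
  simp only [mul_pow, Finset.prod_mul_distrib, ← pow_mul, Finset.prod_pow_eq_pow_sum, ← hw]
  ring_nf

end MvPolynomial

abbrev qWeight (q : ℕ) : Fin 2 → ℕ := fun i => if i = 0 then q else 1

def IsMonomialLike (q : ℕ) (p : MvPolynomial (Fin 2) ℝ) : Prop :=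
  ∃ (A b : ℝ) (k l : ℕ), ∀ x y : ℝ, MvPolynomial.eval ![x, y] p = A * (x + b * y ^ q) ^ k * y ^ l

def dehomogenize (p : MvPolynomial (Fin 2) ℝ) : ℝ[X] := MvPolynomial.aeval ![X, 1] p

theorem eval_dehomogenize (p : MvPolynomial (Fin 2) ℝ) (s : ℝ) :
    (dehomogenize p).eval s = MvPolynomial.eval ![s, 1] p := by
  rw [dehomogenize, MvPolynomial.aeval_def, ← Polynomial.coe_evalRingHom,
    MvPolynomial.eval₂_comp_left, MvPolynomial.eval, MvPolynomial.coe_eval₂Hom]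
  congr 1
  · ext; simp
  · funext i; fin_cases i <;> simp

theorem continuous_eval_vecCons_snd (p : MvPolynomial (Fin 2) ℝ) (x : ℝ) :
    Continuous fun y : ℝ => MvPolynomial.eval ![x, y] p :=
  (MvPolynomial.continuous_eval p).comp (by fun_prop)

-- Identities between polynomial functions are checked where `y ≠ 0`, so that one may divide by `y`.
theorem eq_of_continuous_of_forall_ne_zero {F G : ℝ → ℝ} (hF : Continuous F) (hG : Continuous G)
    (h : ∀ y, y ≠ 0 → F y = G y) (y : ℝ) : F y = G y :=
  congrFun (hF.ext_on (dense_compl_singleton 0) hG h) y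

section WeightedHomogeneous

variable {q e : ℕ} {p : MvPolynomial (Fin 2) ℝ}

theorem eval_arc (hp : p.IsWeightedHomogeneous (qWeight q) e) (s t : ℝ) :
    MvPolynomial.eval ![s * t ^ q, t] p = t ^ e * (dehomogenize p).eval s := by
  have harc : (fun i => t ^ qWeight q i * ![s, 1] i) = ![s * t ^ q, t] := by
    funext i; fin_cases i <;> simp [mul_comm]
  rw [eval_dehomogenize, ← hp.eval_pow_mul, harc]

theorem eval_eq_pow_mul_eval_div (hp : p.IsWeightedHomogeneous (qWeight q) e) (x : ℝ) {y : ℝ}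
    (hy : y ≠ 0) :
    MvPolynomial.eval ![x, y] p = y ^ e * (dehomogenize p).eval (x / y ^ q) := by
  rw [← eval_arc hp, div_mul_cancel₀ x (pow_ne_zero q hy)]

theorem weight_qWeight (v : Fin 2 →₀ ℕ) : Finsupp.weight (qWeight q) v = q * v 0 + v 1 := by
  rw [Finsupp.weight_apply, Finsupp.sum_fintype _ _ (by simp)]
  simp [mul_comm]

theorem mul_natDegree_dehomogenize_le (hp : p.IsWeightedHomogeneous (qWeight q) e) :
    q * (dehomogenize p).natDegree ≤ e := by
  rcases Nat.eq_zero_or_pos q with rfl | hq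
  · simp
  refine le_trans (Nat.mul_le_mul_left q ?_) (Nat.mul_div_le e q)
  rw [dehomogenize, MvPolynomial.aeval_def, MvPolynomial.eval₂_eq']
  refine natDegree_sum_le_of_forall_le _ _ fun v hv => ?_
  have hw := hp (MvPolynomial.mem_support_iff.mp hv)
  rw [weight_qWeight] at hw
  simp only [Fin.prod_univ_two, Matrix.cons_val_zero, Matrix.cons_val_one, one_pow, mul_one]
  refine (natDegree_C_mul_le _ _).trans ((natDegree_X_pow_le _).trans ?_)
  rw [Nat.le_div_iff_mul_le hq]
  linarith

theorem dehomogenize_ne_zero (hp : p.IsWeightedHomogeneous (qWeight q) e) (hp0 : p ≠ 0) :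
    dehomogenize p ≠ 0 := by
  intro h
  refine hp0 (MvPolynomial.funext fun v => ?_)
  have key := eq_of_continuous_of_forall_ne_zero (continuous_eval_vecCons_snd p (v 0))
    continuous_const
    (fun y hy => by rw [eval_eq_pow_mul_eval_div hp _ hy, h, eval_zero, mul_zero]) (v 1)
  rwa [map_zero, ← show ![v 0, v 1] = v from List.ofFn_inj.mp rfl]

theorem eval_eq_pow_mul_eval_reverse (hp : p.IsWeightedHomogeneous (qWeight q) e) {x : ℝ}
    (hx : x ≠ 0) (y : ℝ) :
    MvPolynomial.eval ![x, y] p = x ^ (dehomogenize p).natDegree *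
      y ^ (e - q * (dehomogenize p).natDegree) * (dehomogenize p).reverse.eval (y ^ q / x) := by
  set P := dehomogenize p
  have hrev : ∀ s : ℝ, s ≠ 0 → P.eval s = P.reverse.eval s⁻¹ * s ^ P.natDegree := fun s hs => by
    let := invertibleOfNonzero hs
    simpa [invOf_eq_inv] using (eval₂_reverse_mul_pow (RingHom.id ℝ) s P).symm
  refine eq_of_continuous_of_forall_ne_zero (continuous_eval_vecCons_snd p x)
    (G := fun y => x ^ P.natDegree * y ^ (e - q * P.natDegree) * P.reverse.eval (y ^ q / x))
    (by fun_prop) (fun y hy => ?_) y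
  obtain ⟨m, hm⟩ : ∃ m, e = q * P.natDegree + m := ⟨_, (Nat.add_sub_of_le
    (mul_natDegree_dehomogenize_le hp)).symm⟩
  have hyq : y ^ q ≠ 0 := pow_ne_zero q hy
  rw [eval_eq_pow_mul_eval_div hp x hy, hrev _ (div_ne_zero hx hyq), inv_div, hm,
    Nat.add_sub_cancel_left, pow_add, pow_mul, div_pow]
  field_simp

theorem isMonomialLike_of_eval_dehomogenize (hp : p.IsWeightedHomogeneous (qWeight q) e)
    {a r : ℝ} {k : ℕ} (h : ∀ s, (dehomogenize p).eval s = a * (s + r) ^ k) :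
    IsMonomialLike q p := by
  refine ⟨a, r, k, e - q * k, fun x y => eq_of_continuous_of_forall_ne_zero
    (continuous_eval_vecCons_snd p x)
    (G := fun y => a * (x + r * y ^ q) ^ k * y ^ (e - q * k)) (by fun_prop) (fun y hy => ?_) y⟩
  rw [eval_eq_pow_mul_eval_div hp x hy, h]
  rcases eq_or_ne a 0 with rfl | ha
  · simp
  have hk : q * k ≤ e := by
    have hP : dehomogenize p = C a * (X + C r) ^ k := Polynomial.funext fun s => by simp [h]
    have := mul_natDegree_dehomogenize_le hp
    rwa [hP, natDegree_C_mul ha, (monic_X_add_C r).natDegree_pow, natDegree_X_add_C,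
      mul_one] at this
  obtain ⟨m, rfl⟩ : ∃ m, e = q * k + m := ⟨_, (Nat.add_sub_of_le hk).symm⟩
  have hxr : (x / y ^ q + r) * y ^ q = x + r * y ^ q := by field_simp
  rw [Nat.add_sub_cancel_left, pow_add, pow_mul, ← hxr, mul_pow]
  ring

theorem natDegree_dehomogenize_pos (hp : p.IsWeightedHomogeneous (qWeight q) e)
    (hpm : ¬ IsMonomialLike q p) : 0 < (dehomogenize p).natDegree := by
  refine Nat.pos_of_ne_zero fun h0 => hpm (isMonomialLike_of_eval_dehomogenize hp (r := 0) (k := 0)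
    (a := (dehomogenize p).coeff 0) fun s => ?_)
  rw [eq_C_of_natDegree_eq_zero h0]
  simp

theorem eval_eq_eval_of_eval_dehomogenize_eq {f g : MvPolynomial (Fin 2) ℝ}
    (hf : f.IsWeightedHomogeneous (qWeight q) e) (hg : g.IsWeightedHomogeneous (qWeight q) e)
    {α δ μ : ℝ} (hδ : δ ≠ 0)
    (h : ∀ s, (dehomogenize f).eval s = δ ^ e * (dehomogenize g).eval (δ⁻¹ ^ q * (α * s + μ)))
    (x y : ℝ) : MvPolynomial.eval ![x, y] f = MvPolynomial.eval ![α * x + μ * y ^ q, δ * y] g := by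
  refine eq_of_continuous_of_forall_ne_zero (continuous_eval_vecCons_snd f x)
    (G := fun y => MvPolynomial.eval ![α * x + μ * y ^ q, δ * y] g)
    ((MvPolynomial.continuous_eval g).comp (by fun_prop)) (fun y hy => ?_) y
  have harg : δ⁻¹ ^ q * (α * (x / y ^ q) + μ) = (α * x + μ * y ^ q) / (δ * y) ^ q := by
    rw [inv_pow, mul_pow]
    field_simp
  rw [eval_eq_pow_mul_eval_div hf x hy, h, eval_eq_pow_mul_eval_div hg _ (mul_ne_zero hδ hy),
    harg, mul_pow]
  ring

end WeightedHomogeneous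

theorem Ultrafilter.le_cocompact_or_exists_le_nhds {X : Type*} [TopologicalSpace X]
    (F : Ultrafilter X) : (F : Filter X) ≤ cocompact X ∨ ∃ x, (F : Filter X) ≤ 𝓝 x := by
  refine or_iff_not_imp_left.2 fun h => ?_
  rw [hasBasis_cocompact.ge_iff] at h
  push Not at h
  obtain ⟨K, hK, hKF⟩ := h
  obtain ⟨x, -, hx⟩ := hK.ultrafilter_le_nhds F
    (le_principal_iff.2 (Ultrafilter.compl_notMem_iff.1 hKF))
  exact ⟨x, hx⟩

theorem tendsto_cobounded_of_tendsto_sub {α E : Type*} [SeminormedAddCommGroup E] {l : Filter α}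
    {u v : α → E} {x : E} (hv : Tendsto v l (cobounded E)) (h : Tendsto (u - v) l (𝓝 x)) :
    Tendsto u l (cobounded E) := by
  rw [← tendsto_norm_atTop_iff_cobounded] at hv ⊢
  refine tendsto_atTop_mono (fun t => ?_) (hv.atTop_add h.norm.neg)
  have := norm_sub_norm_le (v t) (u t)
  rw [norm_sub_rev] at this
  simp only [Pi.sub_apply] at this ⊢
  linarith

theorem tendsto_mul_cobounded {α : Type*} {l : Filter α} {B w : α → ℝ} {b : ℝ} (hb : b ≠ 0)
    (hB : Tendsto B l (𝓝 b)) (hw : Tendsto w l (cobounded ℝ)) :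
    Tendsto (fun t => B t * w t) l (cobounded ℝ) := by
  rw [← tendsto_norm_atTop_iff_cobounded] at hw ⊢
  simpa only [norm_mul] using hB.norm.pos_mul_atTop (norm_pos_iff.2 hb) hw

theorem isEquivalent_of_tendsto_same {α : Type*} {l : Filter α} {u v : α → ℝ} {a : ℝ}
    (ha : a ≠ 0) (hu : Tendsto u l (𝓝 a)) (hv : Tendsto v l (𝓝 a)) : u ~[l] v :=
  ((isEquivalent_const_iff_tendsto ha).2 hu).trans ((isEquivalent_const_iff_tendsto ha).2 hv).symm

theorem isEquivalent_of_tendsto_sub {α : Type*} {l : Filter α} {u v : α → ℝ} {κ : ℝ}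
    (h : Tendsto (u - v) l (𝓝 κ)) (hv : Tendsto v l (cobounded ℝ)) : u ~[l] v :=
  (h.isBigO_one ℝ).trans_isLittleO
    ((isLittleO_one_left_iff ℝ).2 (tendsto_norm_atTop_iff_cobounded.2 hv))

theorem isEquivalent_mul_eval {α : Type*} {l : Filter α} {Φ : ℝ[X]} {a b κ : ℝ} (ha : a ≠ 0)
    (hb : b ≠ 0) {A A' B B' w w' : α → ℝ} (hA : Tendsto A l (𝓝 a)) (hA' : Tendsto A' l (𝓝 a))
    (hB : Tendsto B l (𝓝 b)) (hB' : Tendsto B' l (𝓝 b)) (hw : Tendsto (w - w') l (𝓝 κ))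
    (hw' : Tendsto w' l (cobounded ℝ)) :
    (fun t => A t * Φ.eval (B t * w t)) ~[l] (fun t => A' t * Φ.eval (B' t * w' t)) := by
  have hz := tendsto_mul_cobounded hb hB (tendsto_cobounded_of_tendsto_sub hw' hw)
  have hz' := tendsto_mul_cobounded hb hB' hw'
  have hzz : (fun t => B t * w t) ~[l] (fun t => B' t * w' t) :=
    (isEquivalent_of_tendsto_same hb hB hB').mul (isEquivalent_of_tendsto_sub hw hw')
  refine (isEquivalent_of_tendsto_same ha hA hA').mul ?_
  exact (isEquivalent_cobounded_leading_monomial.comp_tendsto hz).trans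
    ((IsEquivalent.refl.mul (hzz.pow Φ.natDegree)).trans
      (isEquivalent_cobounded_leading_monomial.comp_tendsto hz').symm)

section PowMul

variable {l : Filter ℝ} {d N : ℕ}

theorem eventually_eq_pow_mul_of_lt (hl : l ≤ 𝓝[≠] 0) {G F : ℝ → ℝ}
    (h : ∀ᶠ t in l, t ^ d * G t = t ^ N * F t) (hdN : d < N) :
    ∀ᶠ t in l, G t = t ^ (N - d) * F t := by
  filter_upwards [h, hl self_mem_nhdsWithin] with t ht ht0
  rw [← Nat.add_sub_of_le hdN.le, pow_add, mul_assoc] at ht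
  exact mul_left_cancel₀ (pow_ne_zero d ht0) ht

variable [l.NeBot] {p : ℝ} {F : ℝ → ℝ}

theorem eq_of_pow_mul_eq (hl : l ≤ 𝓝[≠] 0) {R : ℝ} (hF : Tendsto F l (𝓝 R))
    (h : ∀ᶠ t in l, t ^ d * p = t ^ N * F t) :
    (d < N → p = 0) ∧ (N < d → R = 0) ∧ (d = N → p = R) := by
  have ht : Tendsto (fun t : ℝ => t) l (𝓝 0) := hl.trans nhdsWithin_le_nhds
  refine ⟨fun hdN => ?_, fun hNd => ?_, fun hdN => ?_⟩
  · have hlim := (ht.pow (N - d)).mul hF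
    rw [zero_pow (Nat.sub_ne_zero_of_lt hdN), zero_mul] at hlim
    exact tendsto_nhds_unique
      (tendsto_const_nhds.congr' (eventually_eq_pow_mul_of_lt hl (G := fun _ => p) h hdN)) hlim
  · have hlim := (ht.pow (d - N)).mul (tendsto_const_nhds (x := p))
    rw [zero_pow (Nat.sub_ne_zero_of_lt hNd), zero_mul] at hlim
    refine tendsto_nhds_unique hF (hlim.congr' ?_)
    filter_upwards [eventually_eq_pow_mul_of_lt hl (F := fun _ => p) (h.mono fun t ht => ht.symm)
      hNd] with t ht using ht.symm
  · subst hdN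
    refine tendsto_nhds_unique tendsto_const_nhds (hF.congr' ?_)
    filter_upwards [h, hl self_mem_nhdsWithin] with t ht ht0
    exact (mul_left_cancel₀ (pow_ne_zero d ht0) ht).symm

theorem eq_of_isEquivalent_pow_mul (hl : l ≤ 𝓝[≠] 0) {p' : ℝ} {F' : ℝ → ℝ} (hFF : F ~[l] F')
    (h : ∀ᶠ t in l, t ^ d * p = t ^ N * F t) (h' : ∀ᶠ t in l, t ^ d * p' = t ^ N * F' t) :
    p = p' := by
  have hpow : (fun t : ℝ => t ^ d * p) ~[l] (fun t => t ^ d * p') :=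
    ((IsEquivalent.refl (u := fun t : ℝ => t ^ N)).mul hFF).congr_left
      (h.mono fun t ht => ht.symm) |>.congr_right (h'.mono fun t ht => ht.symm)
  have hconst : (fun _ : ℝ => p) ~[l] (fun _ => p') := by
    refine (hpow.div (IsEquivalent.refl (u := fun t : ℝ => t ^ d))).congr_left ?_ |>.congr_right ?_
    all_goals
      filter_upwards [hl self_mem_nhdsWithin] with t ht0
      exact mul_div_cancel_left₀ _ (pow_ne_zero d ht0)
  exact tendsto_nhds_unique (hconst.tendsto_nhds tendsto_const_nhds) tendsto_const_nhds

end PowMul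

theorem exists_eval_eq_mul_eval_affine {P Φ : ℝ[X]} (hP : 0 < P.natDegree) (hΦ : Φ ≠ 0)
    {d N : ℕ} {a b κ : ℝ} (ha : a ≠ 0) (hb : b ≠ 0) (hκ : κ ≠ 0) {A B w : ℝ → ℝ → ℝ}
    (hA : ∀ c, Tendsto (A c) (𝓝[≠] 0) (𝓝 a)) (hB : ∀ c, Tendsto (B c) (𝓝[≠] 0) (𝓝 b))
    (hw : ∀ c c', Tendsto (fun t => w c t - w c' t) (𝓝[≠] 0) (𝓝 ((c - c') * κ)))
    (hE : ∀ c, ∀ᶠ t in 𝓝[≠] 0, t ^ d * P.eval c = t ^ N * (A c t * Φ.eval (B c t * w c t))) :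
    d = N ∧ ∃ μ, ∀ c, P.eval c = a * Φ.eval (b * (κ * c + μ)) := by
  -- An ultrafilter replaces the extraction of a subsequence along which `w 0` converges or
  -- escapes to infinity.
  set U := Ultrafilter.of (𝓝[≠] (0 : ℝ))
  have hU : (U : Filter ℝ) ≤ 𝓝[≠] 0 := Ultrafilter.of_le _
  have hEU := fun c => (hE c).filter_mono hU
  have hwU := fun c c' => (hw c c').mono_left hU
  rcases (U.map (w 0)).le_cocompact_or_exists_le_nhds with hinf | ⟨μ, hμ⟩
  · rw [← Metric.cobounded_eq_cocompact] at hinf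
    have hconst : ∀ c, P.eval c = P.eval 0 := fun c =>
      eq_of_isEquivalent_pow_mul hU (isEquivalent_mul_eval ha hb ((hA c).mono_left hU)
        ((hA 0).mono_left hU) ((hB c).mono_left hU) ((hB 0).mono_left hU) (hwU c 0) hinf)
        (hEU c) (hEU 0)
    refine absurd (natDegree_eq_zero.2 ⟨P.eval 0, Polynomial.funext fun c => ?_⟩) hP.ne'
    rw [eval_C, ← hconst]
  have hwc : ∀ c, Tendsto (w c) U (𝓝 (κ * c + μ)) := fun c => by
    simpa [mul_comm] using (hwU c 0).add (hμ : Tendsto (w 0) U (𝓝 μ))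
  have key := fun c => eq_of_pow_mul_eq hU (((hA c).mono_left hU).mul
    ((Φ.continuous.tendsto _).comp (((hB c).mono_left hU).mul (hwc c)))) (hEU c)
  rcases lt_trichotomy d N with hdN | rfl | hNd
  · refine absurd (natDegree_eq_zero.2 ⟨0, Polynomial.funext fun c => ?_⟩) hP.ne'
    rw [eval_C, (key c).1 hdN]
  · exact ⟨rfl, μ, fun c => (key c).2.2 rfl⟩
  · refine absurd (Polynomial.funext fun x => ?_) hΦ
    have hx : b * (κ * ((x / b - μ) / κ) + μ) = x := by field_simp; ring
    have := (key ((x / b - μ) / κ)).2.1 hNd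
    rwa [hx, mul_eq_zero, or_iff_right ha, ← eval_zero (x := x)] at this

section Arc

variable {F : Type*} [NormedAddCommGroup F] [NormedSpace ℝ F] {σ : ℝ × ℝ → F}
  {L : ℝ × ℝ →L[ℝ] F} {q : ℕ}

theorem tendsto_arc (hq : 0 < q) (c : ℝ) :
    Tendsto (fun t : ℝ => (c * t ^ q, t)) (𝓝 0) (𝓝 0) := by
  have : Continuous (fun t : ℝ => (c * t ^ q, t)) := by fun_prop
  simpa [zero_pow hq.ne', Prod.mk_zero_zero] using this.tendsto 0

theorem tendsto_inv_smul_arc (hq : 1 < q) (hL : HasFDerivAt σ L 0) (hσ0 : σ 0 = 0) (c : ℝ) :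
    Tendsto (fun t : ℝ => t⁻¹ • σ (c * t ^ q, t)) (𝓝[≠] 0) (𝓝 (L (0, 1))) := by
  have hpow : HasDerivAt (fun t : ℝ => c * t ^ q) 0 0 := by
    simpa [zero_pow (Nat.sub_ne_zero_of_lt hq)] using (hasDerivAt_pow q (0 : ℝ)).const_mul c
  have hcomp := hL.comp_hasDerivAt_of_eq (0 : ℝ) (hpow.prodMk (hasDerivAt_id 0))
    (by simp [zero_pow (by omega : q ≠ 0), Prod.mk_zero_zero])
  refine (hasDerivAt_iff_tendsto_slope.1 hcomp).congr fun t => ?_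
  simp [slope_def_module, zero_pow (by omega : q ≠ 0), Prod.mk_zero_zero, hσ0]

theorem tendsto_inv_pow_smul_arc_sub (hq : 0 < q) (hL : HasStrictFDerivAt σ L 0) (c c' : ℝ) :
    Tendsto (fun t : ℝ => (t ^ q)⁻¹ • (σ (c * t ^ q, t) - σ (c' * t ^ q, t))) (𝓝[≠] 0)
      (𝓝 ((c - c') • L (1, 0))) := by
  have hdiff : ∀ t : ℝ, ((c * t ^ q, t) : ℝ × ℝ) - (c' * t ^ q, t) = ((c - c') * t ^ q) • (1, 0) :=
    fun t => by ext <;> simp; ring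
  have hO : (fun t : ℝ => ((c * t ^ q, t) : ℝ × ℝ) - (c' * t ^ q, t)) =O[𝓝 0] (fun t => t ^ q) :=
    IsBigO.of_bound (|c - c'| * ‖((1 : ℝ), (0 : ℝ))‖) (Eventually.of_forall fun t => by
      rw [hdiff, norm_smul, norm_mul, Real.norm_eq_abs (c - c')]; ring_nf; rfl)
  have hsmall : (fun t : ℝ => σ (c * t ^ q, t) - σ (c' * t ^ q, t)
      - L (((c * t ^ q, t) : ℝ × ℝ) - (c' * t ^ q, t))) =o[𝓝 0] (fun t => t ^ q) :=
    (hL.isLittleO.comp_tendsto ((tendsto_arc hq c).prodMk_nhds (tendsto_arc hq c'))).trans_isBigO hO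
  rw [← zero_add ((c - c') • L (1, 0))]
  refine ((hsmall.mono nhdsWithin_le_nhds).tendsto_inv_smul_nhds_zero.add_const _).congr' ?_
  filter_upwards [self_mem_nhdsWithin] with t (ht : t ≠ 0)
  rw [hdiff, map_smul, smul_sub, smul_smul, mul_left_comm, inv_mul_cancel₀ (pow_ne_zero q ht),
    mul_one, sub_add_cancel]

end Arc

theorem IsC1DiffeoGerm.exists_hasStrictFDerivAt {E : Type*} [NormedAddCommGroup E]
    [NormedSpace ℝ E] {σ : E → E} (hσ : IsC1DiffeoGerm σ) :
    ∃ L : E →L[ℝ] E, HasStrictFDerivAt σ L 0 ∧ Function.Injective L := by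
  obtain ⟨hσ0, U, V, τ, hU, hV, hU0, hV0, -, -, hτσ, -, hσC1, hτC1⟩ := hσ
  have hL := (hσC1.contDiffAt (hU.mem_nhds hU0)).hasStrictFDerivAt one_ne_zero
  have hM : HasFDerivAt τ (fderiv ℝ τ 0) (σ 0) := by
    rw [hσ0]
    exact ((hτC1.contDiffAt (hV.mem_nhds hV0)).differentiableAt one_ne_zero).hasFDerivAt
  have hid : (fderiv ℝ τ 0).comp (fderiv ℝ σ 0) = ContinuousLinearMap.id ℝ E :=
    (hM.comp 0 hL.hasFDerivAt).unique ((hasFDerivAt_id 0).congr_of_eventuallyEq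
      (eventually_of_mem (hU.mem_nhds hU0) hτσ))
  exact ⟨_, hL, Function.LeftInverse.injective (g := fderiv ℝ τ 0) (DFunLike.congr_fun hid)⟩

theorem ContinuousLinearMap.det_ne_zero_of_injective {L : ℝ × ℝ →L[ℝ] ℝ × ℝ}
    (hL : Function.Injective L) :
    (L (1, 0)).1 * (L (0, 1)).2 ≠ (L (0, 1)).1 * (L (1, 0)).2 := by
  intro h
  have hlin : ∀ x y : ℝ, L (x, y) = x • L (1, 0) + y • L (0, 1) := fun x y => by
    rw [← map_smul, ← map_smul, ← map_add]; simp
  have h1 := @hL ((L (0, 1)).2, -(L (1, 0)).2) 0 (by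
    rw [hlin, map_zero]; ext <;> simp <;> linarith)
  have h2 := @hL ((L (0, 1)).1, -(L (1, 0)).1) 0 (by
    rw [hlin, map_zero]; ext <;> simp <;> linarith)
  have h3 : L (1, 0) = L 0 := by
    simp only [Prod.ext_iff, Prod.fst_zero, Prod.snd_zero, neg_eq_zero] at h1 h2
    rw [map_zero]; ext <;> simp [h1, h2]
  simpa using hL h3

section Germ

variable {q : ℕ} {f g : MvPolynomial (Fin 2) ℝ} {df dg : ℕ} {σ : ℝ × ℝ → ℝ × ℝ}
  {L : ℝ × ℝ →L[ℝ] ℝ × ℝ}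

theorem tendsto_arc_coord_div (hq : 1 < q) (hL : HasStrictFDerivAt σ L 0) (hσ0 : σ 0 = 0)
    (c : ℝ) : Tendsto (fun t => (σ (c * t ^ q, t)).1 / t) (𝓝[≠] 0) (𝓝 (L (0, 1)).1) ∧
      Tendsto (fun t => (σ (c * t ^ q, t)).2 / t) (𝓝[≠] 0) (𝓝 (L (0, 1)).2) := by
  have h := tendsto_inv_smul_arc hq hL.hasFDerivAt hσ0 c
  exact ⟨by simpa [div_eq_inv_mul] using h.fst_nhds, by simpa [div_eq_inv_mul] using h.snd_nhds⟩

theorem tendsto_arc_coord_sub_div (hq : 0 < q) (hL : HasStrictFDerivAt σ L 0) (c c' : ℝ) :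
    Tendsto (fun t => (σ (c * t ^ q, t)).1 / t ^ q - (σ (c' * t ^ q, t)).1 / t ^ q) (𝓝[≠] 0)
      (𝓝 ((c - c') * (L (1, 0)).1)) ∧
    Tendsto (fun t => (σ (c * t ^ q, t)).2 / t ^ q - (σ (c' * t ^ q, t)).2 / t ^ q) (𝓝[≠] 0)
      (𝓝 ((c - c') * (L (1, 0)).2)) := by
  have h := tendsto_inv_pow_smul_arc_sub hq hL c c'
  exact ⟨by simpa [div_eq_inv_mul, ← mul_sub] using h.fst_nhds,
    by simpa [div_eq_inv_mul, ← mul_sub] using h.snd_nhds⟩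

theorem tendsto_eval_reverse_arc (hq : 1 < q) (hL : HasStrictFDerivAt σ L 0) (hσ0 : σ 0 = 0)
    (hβ : (L (0, 1)).1 ≠ 0) (P : ℝ[X]) (c : ℝ) :
    Tendsto (fun t => P.reverse.eval ((σ (c * t ^ q, t)).2 ^ q / (σ (c * t ^ q, t)).1))
      (𝓝[≠] 0) (𝓝 P.leadingCoeff) := by
  have ht : Tendsto (fun t : ℝ => t ^ (q - 1)) (𝓝[≠] 0) (𝓝 0) := by
    simpa [zero_pow (Nat.sub_ne_zero_of_lt hq)] using
      ((continuous_pow (q - 1)).tendsto (0 : ℝ)).mono_left nhdsWithin_le_nhds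
  have hlim := ((((tendsto_arc_coord_div hq hL hσ0 c).2).pow q).mul ht).div
    (tendsto_arc_coord_div hq hL hσ0 c).1 hβ
  rw [mul_zero, zero_div] at hlim
  rw [← coeff_zero_reverse, coeff_zero_eq_eval_zero]
  refine ((P.reverse.continuous.tendsto 0).comp hlim).congr' ?_
  filter_upwards [self_mem_nhdsWithin] with t (ht0 : t ≠ 0)
  have hpow : t * t ^ (q - 1) = t ^ q := by rw [← pow_succ', Nat.sub_add_cancel hq.le]
  have key : ∀ x y : ℝ, (y / t) ^ q * t ^ (q - 1) / (x / t) = y ^ q / x := fun x y => by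
    rw [div_pow, ← hpow]
    field_simp
  simp only [Function.comp_apply, Pi.div_apply, key]

theorem fst_apply_zero_one_eq_zero (hq : 1 < q) (hf : f.IsWeightedHomogeneous (qWeight q) df)
    (hg : g.IsWeightedHomogeneous (qWeight q) dg) (hg0 : g ≠ 0) (hfm : ¬ IsMonomialLike q f)
    (hL : HasStrictFDerivAt σ L 0) (hσ0 : σ 0 = 0)
    (hdet : (L (1, 0)).1 * (L (0, 1)).2 ≠ (L (0, 1)).1 * (L (1, 0)).2)
    (hE : ∀ c, ∀ᶠ t in 𝓝[≠] 0, t ^ df * (dehomogenize f).eval c =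
      MvPolynomial.eval ![(σ (c * t ^ q, t)).1, (σ (c * t ^ q, t)).2] g) :
    (L (0, 1)).1 = 0 := by
  by_contra hβ
  set P := dehomogenize g
  set n := P.natDegree
  set σ₁ : ℝ → ℝ → ℝ := fun c t => (σ (c * t ^ q, t)).1
  set σ₂ : ℝ → ℝ → ℝ := fun c t => (σ (c * t ^ q, t)).2
  have hσ₁ := fun c => (tendsto_arc_coord_div hq hL hσ0 c).1
  have hσ₂ := fun c => (tendsto_arc_coord_div hq hL hσ0 c).2
  have hrev := tendsto_eval_reverse_arc hq hL hσ0 hβ P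
  have hlc : P.leadingCoeff ≠ 0 := leadingCoeff_ne_zero.2 (dehomogenize_ne_zero hg hg0)
  have hfP := natDegree_dehomogenize_pos hf hfm
  have hE' : ∀ c, ∀ᶠ t in 𝓝[≠] 0, t ^ df * (dehomogenize f).eval c =
      σ₁ c t ^ n * σ₂ c t ^ (dg - q * n) * P.reverse.eval (σ₂ c t ^ q / σ₁ c t) := fun c => by
    filter_upwards [hE c, (hσ₁ c).eventually_ne hβ] with t ht hσ₁t
    rw [ht, eval_eq_pow_mul_eval_reverse hg (left_ne_zero_of_mul hσ₁t)]
  -- `σ₂` has order `t` if `δ ≠ 0`, and order `t ^ q` if `δ = 0`.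
  by_cases hδ : (L (0, 1)).2 = 0
  · have hγ : (L (1, 0)).2 ≠ 0 := fun hγ => hdet (by rw [hδ, hγ]; ring)
    have hE'' : ∀ c, ∀ᶠ t in 𝓝[≠] 0, t ^ df * (dehomogenize f).eval c =
        t ^ (n + q * (dg - q * n)) * ((σ₁ c t / t) ^ n * P.reverse.eval (σ₂ c t ^ q / σ₁ c t) *
          (X ^ (dg - q * n)).eval (1 * (σ₂ c t / t ^ q))) := fun c => by
      filter_upwards [hE' c, self_mem_nhdsWithin] with t ht (ht0 : t ≠ 0)
      rw [ht, eval_pow, eval_X, one_mul, pow_add, div_pow, div_pow, ← pow_mul]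
      field_simp
    obtain ⟨-, μ, hμ⟩ := exists_eval_eq_mul_eval_affine hfP (pow_ne_zero _ X_ne_zero)
      (mul_ne_zero (pow_ne_zero n hβ) hlc) one_ne_zero hγ
      (fun c => ((hσ₁ c).pow n).mul (hrev c)) (fun _ => tendsto_const_nhds)
      (fun c c' => (tendsto_arc_coord_sub_div (by omega) hL c c').2) hE''
    refine hfm (isMonomialLike_of_eval_dehomogenize hf (k := dg - q * n)
      (a := (L (0, 1)).1 ^ n * P.leadingCoeff * (L (1, 0)).2 ^ (dg - q * n))
      (r := μ / (L (1, 0)).2) fun s => ?_)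
    have hshift : (L (1, 0)).2 * (s + μ / (L (1, 0)).2) = (L (1, 0)).2 * s + μ := by
      field_simp
    rw [hμ, eval_pow, eval_X, one_mul, mul_assoc _ ((L (1, 0)).2 ^ _), ← mul_pow, hshift]
  · have hE'' : ∀ c, ∀ᶠ t in 𝓝[≠] 0, t ^ df * (dehomogenize f).eval c =
        t ^ (n + (dg - q * n)) * ((σ₁ c t / t) ^ n * (σ₂ c t / t) ^ (dg - q * n) *
          P.reverse.eval (σ₂ c t ^ q / σ₁ c t) * (1 : ℝ[X]).eval (1 * c)) := fun c => by
      filter_upwards [hE' c, self_mem_nhdsWithin] with t ht (ht0 : t ≠ 0)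
      rw [ht, eval_one, pow_add, div_pow, div_pow]
      field_simp
    obtain ⟨-, μ, hμ⟩ := exists_eval_eq_mul_eval_affine hfP one_ne_zero
      (mul_ne_zero (mul_ne_zero (pow_ne_zero n hβ) (pow_ne_zero _ hδ)) hlc) one_ne_zero
      one_ne_zero (fun c => (((hσ₁ c).pow n).mul ((hσ₂ c).pow (dg - q * n))).mul (hrev c))
      (fun _ => tendsto_const_nhds) (fun c c' => by simp) hE''
    exact hfm (isMonomialLike_of_eval_dehomogenize hf (k := 0) (r := 0) fun s => by
      rw [hμ, eval_one, pow_zero, mul_one])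

theorem exists_eval_dehomogenize_eq_of_fst_apply_zero_one_eq_zero (hq : 1 < q)
    (hg : g.IsWeightedHomogeneous (qWeight q) dg)
    (hg0 : g ≠ 0) (hfP : 0 < (dehomogenize f).natDegree) (hL : HasStrictFDerivAt σ L 0)
    (hσ0 : σ 0 = 0) (hdet : (L (1, 0)).1 * (L (0, 1)).2 ≠ (L (0, 1)).1 * (L (1, 0)).2)
    (hE : ∀ c, ∀ᶠ t in 𝓝[≠] 0, t ^ df * (dehomogenize f).eval c =
      MvPolynomial.eval ![(σ (c * t ^ q, t)).1, (σ (c * t ^ q, t)).2] g)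
    (hβ : (L (0, 1)).1 = 0) :
    df = dg ∧ ∃ μ, ∀ s, (dehomogenize f).eval s =
      (L (0, 1)).2 ^ dg * (dehomogenize g).eval ((L (0, 1)).2⁻¹ ^ q * ((L (1, 0)).1 * s + μ)) := by
  obtain ⟨hα, hδ⟩ : (L (1, 0)).1 ≠ 0 ∧ (L (0, 1)).2 ≠ 0 := by simpa [hβ] using hdet
  set σ₁ : ℝ → ℝ → ℝ := fun c t => (σ (c * t ^ q, t)).1
  set σ₂ : ℝ → ℝ → ℝ := fun c t => (σ (c * t ^ q, t)).2
  have hσ₂ := fun c => (tendsto_arc_coord_div hq hL hσ0 c).2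
  have hB : ∀ c, Tendsto (fun t => (t / σ₂ c t) ^ q) (𝓝[≠] 0) (𝓝 ((L (0, 1)).2⁻¹ ^ q)) :=
    fun c => (((hσ₂ c).inv₀ hδ).pow q).congr fun t => by simp [σ₂, inv_div]
  have hE' : ∀ c, ∀ᶠ t in 𝓝[≠] 0, t ^ df * (dehomogenize f).eval c = t ^ dg *
      ((σ₂ c t / t) ^ dg * (dehomogenize g).eval ((t / σ₂ c t) ^ q * (σ₁ c t / t ^ q))) := by
    intro c
    filter_upwards [hE c, (hσ₂ c).eventually_ne hδ, self_mem_nhdsWithin] with t ht hσ₂t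
      (ht0 : t ≠ 0)
    have hσ₂0 : σ₂ c t ≠ 0 := (div_ne_zero_iff.1 hσ₂t).1
    have harg : (t / σ₂ c t) ^ q * (σ₁ c t / t ^ q) = σ₁ c t / σ₂ c t ^ q := by
      rw [div_pow]
      field_simp
    rw [ht, eval_eq_pow_mul_eval_div hg _ hσ₂0, harg, ← mul_assoc, ← mul_pow,
      mul_div_cancel₀ _ ht0]
  exact exists_eval_eq_mul_eval_affine hfP (dehomogenize_ne_zero hg hg0) (pow_ne_zero dg hδ)
    (pow_ne_zero q (inv_ne_zero hδ)) hα (fun c => (hσ₂ c).pow dg) hB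
    (fun c c' => (tendsto_arc_coord_sub_div (by omega) hL c c').1) hE'

end Germ

theorem stmt13_general (q : ℕ) (hq : 2 ≤ q)
    (f g : MvPolynomial (Fin 2) ℝ) (hg0 : g ≠ 0) (df dg : ℕ)
    (hf : MvPolynomial.IsWeightedHomogeneous (fun i : Fin 2 => if i = 0 then q else 1) f df)
    (hg : MvPolynomial.IsWeightedHomogeneous (fun i : Fin 2 => if i = 0 then q else 1) g dg)
    (hfm : ¬ ∃ (A b : ℝ) (k l : ℕ), ∀ x y : ℝ,
      MvPolynomial.eval ![x, y] f = A * (x + b * y ^ q) ^ k * y ^ l)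
    (σ : ℝ × ℝ → ℝ × ℝ) (hσ : IsC1DiffeoGerm σ)
    (hfg : ∀ᶠ p in 𝓝 (0 : ℝ × ℝ),
      MvPolynomial.eval ![p.1, p.2] f = MvPolynomial.eval ![(σ p).1, (σ p).2] g) :
    ∃ c₁ c₂ b : ℝ, c₁ ≠ 0 ∧ c₂ ≠ 0 ∧ ∀ x y : ℝ,
      MvPolynomial.eval ![x, y] f =
        MvPolynomial.eval ![c₁ * x - b * y ^ q, c₂ * y] g := by
  obtain ⟨L, hL, hLinj⟩ := hσ.exists_hasStrictFDerivAt
  have hdet := ContinuousLinearMap.det_ne_zero_of_injective hLinj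
  have hE : ∀ c, ∀ᶠ t in 𝓝[≠] 0, t ^ df * (dehomogenize f).eval c =
      MvPolynomial.eval ![(σ (c * t ^ q, t)).1, (σ (c * t ^ q, t)).2] g := fun c => by
    filter_upwards [((tendsto_arc (q := q) (by omega) c).eventually hfg).filter_mono
      nhdsWithin_le_nhds]
      with t ht
    rw [← eval_arc hf, ht]
  have hβ := fst_apply_zero_one_eq_zero hq hf hg hg0 hfm hL hσ.1 hdet hE
  obtain ⟨rfl, μ, hμ⟩ := exists_eval_dehomogenize_eq_of_fst_apply_zero_one_eq_zero hq hg hg0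
    (natDegree_dehomogenize_pos hf hfm) hL hσ.1 hdet hE hβ
  obtain ⟨hα, hδ⟩ : (L (1, 0)).1 ≠ 0 ∧ (L (0, 1)).2 ≠ 0 := by simpa [hβ] using hdet
  refine ⟨_, _, -μ, hα, hδ, fun x y => ?_⟩
  rw [eval_eq_eval_of_eval_dehomogenize_eq hf hg hδ hμ, neg_mul, sub_neg_eq_add]

/-- Classification of C¹ equivalent weighted homogeneous polynomials, case of weights
`(q, 1)` with `q ≥ 2` and `f`, `g` not monomial-like. -/
theorem stmt13 (q : ℕ) (hq : 2 ≤ q)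
    (f g : MvPolynomial (Fin 2) ℝ) (hf0 : f ≠ 0) (hg0 : g ≠ 0) (df dg : ℕ)
    (hf : MvPolynomial.IsWeightedHomogeneous (fun i : Fin 2 => if i = 0 then q else 1) f df)
    (hg : MvPolynomial.IsWeightedHomogeneous (fun i : Fin 2 => if i = 0 then q else 1) g dg)
    (hfm : ¬ ∃ (A b : ℝ) (k l : ℕ), ∀ x y : ℝ,
      MvPolynomial.eval ![x, y] f = A * (x + b * y ^ q) ^ k * y ^ l)
    (hgm : ¬ ∃ (A b : ℝ) (k l : ℕ), ∀ x y : ℝ,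
      MvPolynomial.eval ![x, y] g = A * (x + b * y ^ q) ^ k * y ^ l)
    (σ : ℝ × ℝ → ℝ × ℝ) (hσ : IsC1DiffeoGerm σ)
    (hfg : ∀ᶠ p in 𝓝 (0 : ℝ × ℝ),
      MvPolynomial.eval ![p.1, p.2] f = MvPolynomial.eval ![(σ p).1, (σ p).2] g) :
    ∃ c₁ c₂ b : ℝ, c₁ ≠ 0 ∧ c₂ ≠ 0 ∧ ∀ x y : ℝ,
      MvPolynomial.eval ![x, y] f =
        MvPolynomial.eval ![c₁ * x - b * y ^ q, c₂ * y] g :=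
  stmt13_general q hq f g hg0 df dg hf hg hfm σ hσ hfg
end
end

section
/- Let a > 0 and b > 0 be real numbers, and define f, g : ℝ² → ℝ by f(x,y) = x·(x³ − y⁵)·((x³ − y⁵)³ − y¹⁷) and g(x,y) = x·(x³ + a·y⁵)·(x³ − y⁷)·(x⁶ + b·y¹⁰). Then the Fukui invariants are A(f) = {13} ∪ {n ∈ ℕ : n ≥ 22} ∪ {∞} and A(g) = {13, 23} ∪ {n ∈ ℕ : n ≥ 25} ∪ {∞}. In particular A(f) ≠ A(g). -/
open Filter Topology

noncomputable section

/-- `h` has order of vanishing `n ∈ ℕ ∪ {∞}` at `0`. -/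
def HasOrderAtZero (h : ℝ → ℝ) (n : ℕ∞) : Prop :=
  (n = ⊤ ∧ ∀ᶠ t in 𝓝 (0 : ℝ), h t = 0) ∨
    (∃ s : ℕ, n = (s : ℕ∞) ∧ (∀ j < s, iteratedDeriv j h 0 = 0) ∧ iteratedDeriv s h 0 ≠ 0)

/-- The Fukui invariant of `f`: the set of orders `ord(f ∘ γ)` over all real analytic arcs
`γ : (ℝ,0) → (ℝ²,0)`. -/
def FukuiSet (f : ℝ × ℝ → ℝ) : Set ℕ∞ :=
  {n | ∃ γ : ℝ → ℝ × ℝ, AnalyticAt ℝ γ 0 ∧ γ 0 = 0 ∧ HasOrderAtZero (fun t => f (γ t)) n}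


/-! Along an arc `t ↦ (x t, y t)` with `ord x = p ≥ 1` and `ord y = q ≥ 1`, every factor of `f` and
`g` is a sum of two terms, whose order is at least the smaller of their orders, with equality when
these differ. If `3p < 5q`, both `f` and `g` have order `13p` along the arc. Otherwise the minima
already give `ord (f ∘ γ) ≥ p + 20q ≥ 22` and `ord (g ∘ γ) ≥ p + 15q + min (3p) (7q)`, which is at
least `25` unless `p = 2`, `q = 1`, where the order is exactly `23`. The arcs `(t, t)`, `(t², t)`,
`(tᵏ, t)` and `0` realise every value. -/

theorem hasOrderAtZero_iff {h : ℝ → ℝ} (hh : AnalyticAt ℝ h 0) {n : ℕ∞} :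
    HasOrderAtZero h n ↔ n = analyticOrderAt h 0 := by
  induction n using ENat.recTopCoe with
  | top => simp [HasOrderAtZero, eq_comm (a := ⊤), analyticOrderAt_eq_top]
  | coe s => simp [HasOrderAtZero, eq_comm (a := (s : ℕ∞)),
      analyticOrderAt_eq_nat_iff_iteratedDeriv_eq_zero hh]

theorem fukuiSet_eq {f : ℝ × ℝ → ℝ} (hf : AnalyticAt ℝ f 0) :
    FukuiSet f = {n | ∃ x y : ℝ → ℝ, AnalyticAt ℝ x 0 ∧ AnalyticAt ℝ y 0 ∧ x 0 = 0 ∧ y 0 = 0 ∧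
      analyticOrderAt (fun t ↦ f (x t, y t)) 0 = n} := by
  ext n
  constructor
  · rintro ⟨γ, hγ, hγ0, hn⟩
    refine ⟨fun t ↦ (γ t).1, fun t ↦ (γ t).2, analyticAt_fst.comp hγ, analyticAt_snd.comp hγ,
      by simp [hγ0], by simp [hγ0], ?_⟩
    exact ((hasOrderAtZero_iff (hf.comp_of_eq hγ hγ0)).mp hn).symm
  · rintro ⟨x, y, hx, hy, hx0, hy0, rfl⟩
    have hγ : AnalyticAt ℝ (fun t ↦ (x t, y t)) 0 := hx.prod hy
    exact ⟨_, hγ, by simp [hx0, hy0],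
      (hasOrderAtZero_iff (hf.comp_of_eq hγ (by simp [hx0, hy0]))).mpr rfl⟩

theorem ENat.natCast_le_iff_eq_top_or (m : ℕ) (n : ℕ∞) :
    (m : ℕ∞) ≤ n ↔ n = ⊤ ∨ ∃ s : ℕ, m ≤ s ∧ n = s := by
  induction n using ENat.recTopCoe <;> simp

section Order

variable {𝕜 : Type*} [NontriviallyNormedField 𝕜] {u v : 𝕜 → 𝕜} {z₀ : 𝕜}

theorem AnalyticAt.one_le_analyticOrderAt (hu : AnalyticAt 𝕜 u z₀) (hu0 : u z₀ = 0) :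
    1 ≤ analyticOrderAt u z₀ :=
  Order.one_le_iff_ne_zero.mpr (analyticOrderAt_ne_zero.mpr ⟨hu, hu0⟩)

theorem analyticOrderAt_id_pow (k : ℕ) : analyticOrderAt (id ^ k : 𝕜 → 𝕜) 0 = k := by
  simp [analyticOrderAt_pow analyticAt_id]

theorem analyticOrderAt_const_smul {c : 𝕜} (hc : c ≠ 0) (hu : AnalyticAt 𝕜 u z₀) :
    analyticOrderAt (c • u) z₀ = analyticOrderAt u z₀ := by
  have hc' : analyticOrderAt (fun _ ↦ c) z₀ = 0 := analyticOrderAt_eq_zero.mpr (.inr hc)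
  exact (analyticOrderAt_smul (f := fun _ ↦ c) analyticAt_const hu).trans (by rw [hc', zero_add])

theorem analyticOrderAt_sub_eq_left_of_lt (h : analyticOrderAt u z₀ < analyticOrderAt v z₀) :
    analyticOrderAt (u - v) z₀ = analyticOrderAt u z₀ := by
  rw [sub_eq_add_neg, analyticOrderAt_add_eq_left_of_lt (by rwa [analyticOrderAt_neg])]

theorem analyticOrderAt_sub_eq_right_of_lt (h : analyticOrderAt v z₀ < analyticOrderAt u z₀) :
    analyticOrderAt (u - v) z₀ = analyticOrderAt v z₀ := by
  rw [sub_eq_add_neg, analyticOrderAt_add_eq_right_of_lt (by rwa [analyticOrderAt_neg]),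
    analyticOrderAt_neg]

end Order

section Arcs

variable {𝕜 : Type*} [NontriviallyNormedField 𝕜] {x y : 𝕜 → 𝕜} {z₀ : 𝕜}

def fArc (x y : 𝕜 → 𝕜) : 𝕜 → 𝕜 := x * (x ^ 3 - y ^ 5) * ((x ^ 3 - y ^ 5) ^ 3 - y ^ 17)

def gArc (a b : 𝕜) (x y : 𝕜 → 𝕜) : 𝕜 → 𝕜 :=
  x * (x ^ 3 + a • y ^ 5) * (x ^ 3 - y ^ 7) * (x ^ 6 + b • y ^ 10)

theorem analyticOrderAt_fArc (hx : AnalyticAt 𝕜 x z₀) (hy : AnalyticAt 𝕜 y z₀) :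
    analyticOrderAt (fArc x y) z₀ = analyticOrderAt x z₀ + analyticOrderAt (x ^ 3 - y ^ 5) z₀ +
      analyticOrderAt ((x ^ 3 - y ^ 5) ^ 3 - y ^ 17) z₀ := by
  rw [fArc, analyticOrderAt_mul (by fun_prop) (by fun_prop), analyticOrderAt_mul hx (by fun_prop)]

theorem analyticOrderAt_fArc_of_lt (hx : AnalyticAt 𝕜 x z₀) (hy : AnalyticAt 𝕜 y z₀)
    (h : 3 * analyticOrderAt x z₀ < 5 * analyticOrderAt y z₀) :
    analyticOrderAt (fArc x y) z₀ = 13 * analyticOrderAt x z₀ := by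
  have hU : analyticOrderAt (x ^ 3 - y ^ 5) z₀ = 3 * analyticOrderAt x z₀ := by
    rw [analyticOrderAt_sub_eq_left_of_lt] <;> simp [analyticOrderAt_pow, hx, hy, h]
  have h17 : 3 * (3 * analyticOrderAt x z₀) < 17 * analyticOrderAt y z₀ := by
    generalize analyticOrderAt x z₀ = p at *
    generalize analyticOrderAt y z₀ = q at *
    enat_to_nat; omega
  rw [analyticOrderAt_fArc hx hy, hU, analyticOrderAt_sub_eq_left_of_lt] <;>
    simp only [analyticOrderAt_pow ((hx.pow 3).sub (hy.pow 5)), analyticOrderAt_pow hy, hU,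
      nsmul_eq_mul, Nat.cast_ofNat, h17]
  ring

theorem analyticOrderAt_fArc_of_gt (hx : AnalyticAt 𝕜 x z₀) (hy : AnalyticAt 𝕜 y z₀)
    (hy0 : y z₀ = 0) (h : 5 * analyticOrderAt y z₀ < 3 * analyticOrderAt x z₀) :
    analyticOrderAt (fArc x y) z₀ = analyticOrderAt x z₀ + 20 * analyticOrderAt y z₀ := by
  have hU : analyticOrderAt (x ^ 3 - y ^ 5) z₀ = 5 * analyticOrderAt y z₀ := by
    rw [analyticOrderAt_sub_eq_right_of_lt] <;> simp [analyticOrderAt_pow, hx, hy, h]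
  have h17 : 3 * (5 * analyticOrderAt y z₀) < 17 * analyticOrderAt y z₀ := by
    have hq := hy.one_le_analyticOrderAt hy0
    generalize analyticOrderAt y z₀ = q at *
    enat_to_nat; omega
  rw [analyticOrderAt_fArc hx hy, hU, analyticOrderAt_sub_eq_left_of_lt] <;>
    simp only [analyticOrderAt_pow ((hx.pow 3).sub (hy.pow 5)), analyticOrderAt_pow hy, hU,
      nsmul_eq_mul, Nat.cast_ofNat, h17]
  ring

theorem le_analyticOrderAt_fArc (hx : AnalyticAt 𝕜 x z₀) (hy : AnalyticAt 𝕜 y z₀)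
    (h : 5 * analyticOrderAt y z₀ ≤ 3 * analyticOrderAt x z₀) :
    analyticOrderAt x z₀ + 20 * analyticOrderAt y z₀ ≤ analyticOrderAt (fArc x y) z₀ := by
  have hU : 5 * analyticOrderAt y z₀ ≤ analyticOrderAt (x ^ 3 - y ^ 5) z₀ :=
    (le_min (by simpa [analyticOrderAt_pow, hx] using h) (by simp [analyticOrderAt_pow, hy])).trans
      le_analyticOrderAt_sub
  have hV : 15 * analyticOrderAt y z₀ ≤ analyticOrderAt ((x ^ 3 - y ^ 5) ^ 3 - y ^ 17) z₀ := by
    refine (le_min ?_ ?_).trans le_analyticOrderAt_sub <;>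
      simp only [analyticOrderAt_pow ((hx.pow 3).sub (hy.pow 5)), analyticOrderAt_pow hy,
        nsmul_eq_mul, Nat.cast_ofNat]
    · calc 15 * analyticOrderAt y z₀ = 3 * (5 * analyticOrderAt y z₀) := by ring
        _ ≤ _ := by gcongr
    · gcongr; norm_num
  calc _ = analyticOrderAt x z₀ + 5 * analyticOrderAt y z₀ + 15 * analyticOrderAt y z₀ := by ring
    _ ≤ _ := by rw [analyticOrderAt_fArc hx hy]; gcongr

theorem analyticOrderAt_fArc_eq_or_le (hx : AnalyticAt 𝕜 x z₀) (hy : AnalyticAt 𝕜 y z₀)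
    (hx0 : x z₀ = 0) (hy0 : y z₀ = 0) :
    analyticOrderAt (fArc x y) z₀ = 13 ∨ 22 ≤ analyticOrderAt (fArc x y) z₀ := by
  have hp := hx.one_le_analyticOrderAt hx0
  have hq := hy.one_le_analyticOrderAt hy0
  rcases lt_or_ge (3 * analyticOrderAt x z₀) (5 * analyticOrderAt y z₀) with h | h
  · rw [analyticOrderAt_fArc_of_lt hx hy h]
    generalize analyticOrderAt x z₀ = p at *
    enat_to_nat; omega
  · refine .inr (le_trans ?_ (le_analyticOrderAt_fArc hx hy h))
    generalize analyticOrderAt x z₀ = p at *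
    generalize analyticOrderAt y z₀ = q at *
    enat_to_nat; omega

theorem analyticOrderAt_gArc {a b : 𝕜} (hx : AnalyticAt 𝕜 x z₀) (hy : AnalyticAt 𝕜 y z₀) :
    analyticOrderAt (gArc a b x y) z₀ = analyticOrderAt x z₀ +
      analyticOrderAt (x ^ 3 + a • y ^ 5) z₀ + analyticOrderAt (x ^ 3 - y ^ 7) z₀ +
        analyticOrderAt (x ^ 6 + b • y ^ 10) z₀ := by
  rw [gArc, analyticOrderAt_mul (by fun_prop) (by fun_prop),
    analyticOrderAt_mul (by fun_prop) (by fun_prop), analyticOrderAt_mul hx (by fun_prop)]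

theorem analyticOrderAt_gArc_of_lt {a b : 𝕜} (ha : a ≠ 0) (hb : b ≠ 0)
    (hx : AnalyticAt 𝕜 x z₀) (hy : AnalyticAt 𝕜 y z₀)
    (h5 : 3 * analyticOrderAt x z₀ < 5 * analyticOrderAt y z₀) :
    analyticOrderAt (gArc a b x y) z₀ = 13 * analyticOrderAt x z₀ := by
  have h7 : 3 * analyticOrderAt x z₀ < 7 * analyticOrderAt y z₀ :=
    h5.trans_le (by gcongr; norm_num)
  have h10 : 6 * analyticOrderAt x z₀ < 10 * analyticOrderAt y z₀ := by
    generalize analyticOrderAt x z₀ = p at *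
    generalize analyticOrderAt y z₀ = q at *
    enat_to_nat; omega
  rw [analyticOrderAt_gArc hx hy, analyticOrderAt_add_eq_left_of_lt,
    analyticOrderAt_sub_eq_left_of_lt, analyticOrderAt_add_eq_left_of_lt]
  all_goals simp [analyticOrderAt_pow, analyticOrderAt_const_smul ha (hy.pow 5),
    analyticOrderAt_const_smul hb (hy.pow 10), hx, hy, h5, h7, h10]
  ring

theorem analyticOrderAt_gArc_of_lt_of_lt {a b : 𝕜} (ha : a ≠ 0) (hb : b ≠ 0)
    (hx : AnalyticAt 𝕜 x z₀) (hy : AnalyticAt 𝕜 y z₀)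
    (h5 : 5 * analyticOrderAt y z₀ < 3 * analyticOrderAt x z₀)
    (h7 : 3 * analyticOrderAt x z₀ < 7 * analyticOrderAt y z₀) :
    analyticOrderAt (gArc a b x y) z₀ = 4 * analyticOrderAt x z₀ + 15 * analyticOrderAt y z₀ := by
  have h10 : 10 * analyticOrderAt y z₀ < 6 * analyticOrderAt x z₀ := by
    generalize analyticOrderAt x z₀ = p at *
    generalize analyticOrderAt y z₀ = q at *
    enat_to_nat; omega
  rw [analyticOrderAt_gArc hx hy, analyticOrderAt_add_eq_right_of_lt,
    analyticOrderAt_sub_eq_left_of_lt, analyticOrderAt_add_eq_right_of_lt]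
  all_goals simp [analyticOrderAt_pow, analyticOrderAt_const_smul ha (hy.pow 5),
    analyticOrderAt_const_smul hb (hy.pow 10), hx, hy, h5, h7, h10]
  ring

theorem analyticOrderAt_gArc_of_gt {a b : 𝕜} (ha : a ≠ 0) (hb : b ≠ 0)
    (hx : AnalyticAt 𝕜 x z₀) (hy : AnalyticAt 𝕜 y z₀)
    (h7 : 7 * analyticOrderAt y z₀ < 3 * analyticOrderAt x z₀) :
    analyticOrderAt (gArc a b x y) z₀ = analyticOrderAt x z₀ + 22 * analyticOrderAt y z₀ := by
  have h5 : 5 * analyticOrderAt y z₀ < 3 * analyticOrderAt x z₀ :=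
    (by gcongr; norm_num : 5 * analyticOrderAt y z₀ ≤ 7 * analyticOrderAt y z₀).trans_lt h7
  have h10 : 10 * analyticOrderAt y z₀ < 6 * analyticOrderAt x z₀ := by
    generalize analyticOrderAt x z₀ = p at *
    generalize analyticOrderAt y z₀ = q at *
    enat_to_nat; omega
  rw [analyticOrderAt_gArc hx hy, analyticOrderAt_add_eq_right_of_lt,
    analyticOrderAt_sub_eq_right_of_lt, analyticOrderAt_add_eq_right_of_lt]
  all_goals simp [analyticOrderAt_pow, analyticOrderAt_const_smul ha (hy.pow 5),
    analyticOrderAt_const_smul hb (hy.pow 10), hx, hy, h5, h7, h10]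
  ring

theorem le_analyticOrderAt_gArc {a b : 𝕜} (ha : a ≠ 0) (hb : b ≠ 0)
    (hx : AnalyticAt 𝕜 x z₀) (hy : AnalyticAt 𝕜 y z₀)
    (h5 : 5 * analyticOrderAt y z₀ ≤ 3 * analyticOrderAt x z₀) :
    analyticOrderAt x z₀ + 15 * analyticOrderAt y z₀ +
      min (3 * analyticOrderAt x z₀) (7 * analyticOrderAt y z₀) ≤
        analyticOrderAt (gArc a b x y) z₀ := by
  have h10 : 10 * analyticOrderAt y z₀ ≤ 6 * analyticOrderAt x z₀ := by
    generalize analyticOrderAt x z₀ = p at *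
    generalize analyticOrderAt y z₀ = q at *
    enat_to_nat; omega
  have hA : 5 * analyticOrderAt y z₀ ≤ analyticOrderAt (x ^ 3 + a • y ^ 5) z₀ :=
    (le_min (by simpa [analyticOrderAt_pow, hx] using h5)
      (by simp [analyticOrderAt_pow, analyticOrderAt_const_smul ha (hy.pow 5), hy])).trans
        le_analyticOrderAt_add
  have hB : min (3 * analyticOrderAt x z₀) (7 * analyticOrderAt y z₀) ≤
      analyticOrderAt (x ^ 3 - y ^ 7) z₀ :=
    (by simp [analyticOrderAt_pow, hx, hy] :
      min _ _ = min (analyticOrderAt (x ^ 3) z₀) (analyticOrderAt (y ^ 7) z₀)).trans_le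
        le_analyticOrderAt_sub
  have hC : 10 * analyticOrderAt y z₀ ≤ analyticOrderAt (x ^ 6 + b • y ^ 10) z₀ :=
    (le_min (by simpa [analyticOrderAt_pow, hx] using h10)
      (by simp [analyticOrderAt_pow, analyticOrderAt_const_smul hb (hy.pow 10), hy])).trans
        le_analyticOrderAt_add
  calc _ = analyticOrderAt x z₀ + 5 * analyticOrderAt y z₀ +
        min (3 * analyticOrderAt x z₀) (7 * analyticOrderAt y z₀) + 10 * analyticOrderAt y z₀ := by
        ring
    _ ≤ _ := by rw [analyticOrderAt_gArc hx hy]; gcongr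

theorem analyticOrderAt_gArc_eq_or_le {a b : 𝕜} (ha : a ≠ 0) (hb : b ≠ 0)
    (hx : AnalyticAt 𝕜 x z₀) (hy : AnalyticAt 𝕜 y z₀) (hx0 : x z₀ = 0) (hy0 : y z₀ = 0) :
    analyticOrderAt (gArc a b x y) z₀ = 13 ∨ analyticOrderAt (gArc a b x y) z₀ = 23 ∨
      25 ≤ analyticOrderAt (gArc a b x y) z₀ := by
  have hp := hx.one_le_analyticOrderAt hx0
  have hq := hy.one_le_analyticOrderAt hy0
  rcases lt_or_ge (3 * analyticOrderAt x z₀) (5 * analyticOrderAt y z₀) with h | h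
  · rw [analyticOrderAt_gArc_of_lt ha hb hx hy h]
    generalize analyticOrderAt x z₀ = p at *
    enat_to_nat; omega
  by_cases h21 : analyticOrderAt x z₀ = 2 ∧ analyticOrderAt y z₀ = 1
  · rw [analyticOrderAt_gArc_of_lt_of_lt ha hb hx hy (by simp [h21]; norm_num)
      (by simp [h21]; norm_num), h21.1, h21.2]
    norm_num
  refine .inr (.inr (le_trans ?_ (le_analyticOrderAt_gArc ha hb hx hy h)))
  generalize analyticOrderAt x z₀ = p at *
  generalize analyticOrderAt y z₀ = q at *
  calc (25 : ℕ∞) ≤ p + 15 * q + 7 := by enat_to_nat; omega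
    _ ≤ _ := by gcongr; exact le_min (by enat_to_nat; omega) (by enat_to_nat <;> omega)

end Arcs

theorem fukuiSet_eq_of_fArc {f : ℝ × ℝ → ℝ}
    (hf : ∀ p : ℝ × ℝ, f p = p.1 * (p.1 ^ 3 - p.2 ^ 5) * ((p.1 ^ 3 - p.2 ^ 5) ^ 3 - p.2 ^ 17)) :
    FukuiSet f = {n : ℕ∞ | n = 13 ∨ n = ⊤ ∨ ∃ s : ℕ, 22 ≤ s ∧ n = (s : ℕ∞)} := by
  have hfArc : ∀ x y : ℝ → ℝ, (fun t ↦ f (x t, y t)) = fArc x y := fun x y ↦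
    funext fun t ↦ by simp [hf, fArc]
  have hfst : AnalyticAt ℝ (fun p : ℝ × ℝ ↦ p.1) 0 := analyticAt_fst
  have hsnd : AnalyticAt ℝ (fun p : ℝ × ℝ ↦ p.2) 0 := analyticAt_snd
  rw [fukuiSet_eq (by rw [funext hf]; fun_prop)]
  simp_rw [hfArc]
  ext n
  constructor
  · rintro ⟨x, y, hx, hy, hx0, hy0, rfl⟩
    exact (analyticOrderAt_fArc_eq_or_le hx hy hx0 hy0).imp_right
      (ENat.natCast_le_iff_eq_top_or 22 _).mp
  · rintro (rfl | rfl | ⟨s, hs, rfl⟩)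
    · exact ⟨id, id, analyticAt_id, analyticAt_id, rfl, rfl,
        by rw [analyticOrderAt_fArc_of_lt analyticAt_id analyticAt_id] <;> norm_num⟩
    · exact ⟨0, 0, analyticAt_const, analyticAt_const, rfl, rfl,
        analyticOrderAt_eq_top.mpr (by simp [fArc])⟩
    · refine ⟨id ^ (s - 20), id, by fun_prop, analyticAt_id, by simp; omega, rfl, ?_⟩
      rw [analyticOrderAt_fArc_of_gt (by fun_prop) analyticAt_id rfl] <;>
        rw [analyticOrderAt_id_pow, analyticOrderAt_id]
      · norm_cast; omega
      · norm_cast; omega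

theorem fukuiSet_eq_of_gArc {a b : ℝ} (ha : a ≠ 0) (hb : b ≠ 0) {g : ℝ × ℝ → ℝ}
    (hg : ∀ p : ℝ × ℝ,
      g p = p.1 * (p.1 ^ 3 + a * p.2 ^ 5) * (p.1 ^ 3 - p.2 ^ 7) * (p.1 ^ 6 + b * p.2 ^ 10)) :
    FukuiSet g = {n : ℕ∞ | n = 13 ∨ n = 23 ∨ n = ⊤ ∨ ∃ s : ℕ, 25 ≤ s ∧ n = (s : ℕ∞)} := by
  have hgArc : ∀ x y : ℝ → ℝ, (fun t ↦ g (x t, y t)) = gArc a b x y := fun x y ↦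
    funext fun t ↦ by simp [hg, gArc]
  have hfst : AnalyticAt ℝ (fun p : ℝ × ℝ ↦ p.1) 0 := analyticAt_fst
  have hsnd : AnalyticAt ℝ (fun p : ℝ × ℝ ↦ p.2) 0 := analyticAt_snd
  rw [fukuiSet_eq (by rw [funext hg]; fun_prop)]
  simp_rw [hgArc]
  ext n
  constructor
  · rintro ⟨x, y, hx, hy, hx0, hy0, rfl⟩
    exact (analyticOrderAt_gArc_eq_or_le ha hb hx hy hx0 hy0).imp_right
      (Or.imp_right (ENat.natCast_le_iff_eq_top_or 25 _).mp)
  · rintro (rfl | rfl | rfl | ⟨s, hs, rfl⟩)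
    · exact ⟨id, id, analyticAt_id, analyticAt_id, rfl, rfl,
        by rw [analyticOrderAt_gArc_of_lt ha hb analyticAt_id analyticAt_id] <;> norm_num⟩
    · refine ⟨id ^ 2, id, by fun_prop, analyticAt_id, by simp, rfl, ?_⟩
      rw [analyticOrderAt_gArc_of_lt_of_lt ha hb (by fun_prop) analyticAt_id] <;>
        rw [analyticOrderAt_id_pow, analyticOrderAt_id] <;> norm_num
    · exact ⟨0, 0, analyticAt_const, analyticAt_const, rfl, rfl,
        analyticOrderAt_eq_top.mpr (by simp [gArc])⟩
    · refine ⟨id ^ (s - 22), id, by fun_prop, analyticAt_id, by simp; omega, rfl, ?_⟩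
      rw [analyticOrderAt_gArc_of_gt ha hb (by fun_prop) analyticAt_id] <;>
        rw [analyticOrderAt_id_pow, analyticOrderAt_id]
      · norm_cast; omega
      · norm_cast; omega

/-- The Fukui invariants of `f(x,y) = x(x³−y⁵)((x³−y⁵)³−y¹⁷)` and
`g(x,y) = x(x³+ay⁵)(x³−y⁷)(x⁶+by¹⁰)` are `{13} ∪ {n ≥ 22} ∪ {∞}` and
`{13, 23} ∪ {n ≥ 25} ∪ {∞}` respectively; in particular they differ. -/
theorem stmt15 (a b : ℝ) (ha : 0 < a) (hb : 0 < b) (f g : ℝ × ℝ → ℝ)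
    (hf : ∀ p : ℝ × ℝ,
      f p = p.1 * (p.1 ^ 3 - p.2 ^ 5) * ((p.1 ^ 3 - p.2 ^ 5) ^ 3 - p.2 ^ 17))
    (hg : ∀ p : ℝ × ℝ,
      g p = p.1 * (p.1 ^ 3 + a * p.2 ^ 5) * (p.1 ^ 3 - p.2 ^ 7) * (p.1 ^ 6 + b * p.2 ^ 10)) :
    FukuiSet f = {n : ℕ∞ | n = 13 ∨ n = ⊤ ∨ ∃ s : ℕ, 22 ≤ s ∧ n = (s : ℕ∞)} ∧
    FukuiSet g = {n : ℕ∞ | n = 13 ∨ n = 23 ∨ n = ⊤ ∨ ∃ s : ℕ, 25 ≤ s ∧ n = (s : ℕ∞)} ∧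
    FukuiSet f ≠ FukuiSet g := by
  have hF := fukuiSet_eq_of_fArc hf
  have hG := fukuiSet_eq_of_gArc ha.ne' hb.ne' hg
  refine ⟨hF, hG, fun h ↦ ?_⟩
  have h22 : (22 : ℕ∞) ∈ FukuiSet f := by
    rw [hF]
    exact .inr (.inr ⟨22, le_rfl, rfl⟩)
  rw [h, hG] at h22
  obtain ⟨s, hs, h22⟩ : ∃ s : ℕ, 25 ≤ s ∧ (22 : ℕ∞) = s := by simpa using h22
  have : 22 = s := by exact_mod_cast h22
  omega
end
end
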